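/- arXiv:2108.05500 — 11 statements merged into one kernel-verified Lean document; each statement's English description precedes it below -/
import Mathlib

section
/- Fix constants 0 < c₁ < c₂ and 0 < a < b. Set λ := (1/(2M[a,b]))·(c₁/s(b) − c₂/s(a) + 2∫_a^b h(y) m(y) dy). Then the function u(x) := c₁x + ∫_a^x 2 s(t) (∫_t^b (c₁ μ(y) + h(y) − λ) m(y) dy) dt is twice continuously differentiable on [a,b] and satisfies the Neumann boundary value problem (1/2)σ(x)² u''(x) + μ(x) u'(x) + h(x) = λ for all x ∈ (a,b), u'(a) = c₂, and u'(b) = c₁. Moreover, if ∫_a^b h(y) m(y) dy + c₁/(2 s(b)) − c₂/(2 s(a)) > 0, then λ > 0. -/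
open Real MeasureTheory Set Filter Topology intervalIntegral

/-- The scale density `s(x) = exp(-∫₁ˣ 2μ(y)/σ(y)² dy)`. -/
noncomputable def sden (μ σ : ℝ → ℝ) (x : ℝ) : ℝ :=
  Real.exp (-(∫ y in (1:ℝ)..x, 2 * μ y / (σ y) ^ 2))

/-- The speed density `m(x) = 1/(σ(x)² s(x))`. -/
noncomputable def mden (μ σ : ℝ → ℝ) (x : ℝ) : ℝ :=
  1 / ((σ x) ^ 2 * sden μ σ x)

/-- The speed measure `M[a,b] = ∫_a^b m(x) dx`. -/
noncomputable def Mspeed (μ σ : ℝ → ℝ) (a b : ℝ) : ℝ :=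
  ∫ x in a..b, mden μ σ x

lemma uIcc_subset_Ioi_zero {a x : ℝ} (ha : 0 < a) (hx : 0 < x) :
    Set.uIcc a x ⊆ Set.Ioi 0 := fun y hy => lt_of_lt_of_le (lt_min ha hx) hy.1

lemma intInt_of_contOn {f : ℝ → ℝ} (hf : ContinuousOn f (Set.Ioi 0)) {a x : ℝ}
    (ha : 0 < a) (hx : 0 < x) : IntervalIntegrable f MeasureTheory.volume a x :=
  (hf.mono (uIcc_subset_Ioi_zero ha hx)).intervalIntegrable

lemma hasDerivAt_primitive_of_contOn {f : ℝ → ℝ} (hf : ContinuousOn f (Set.Ioi 0)) {a x : ℝ}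
    (ha : 0 < a) (hx : 0 < x) :
    HasDerivAt (fun t => ∫ y in a..t, f y) (f x) x :=
  intervalIntegral.integral_hasDerivAt_right (intInt_of_contOn hf ha hx)
    (hf.stronglyMeasurableAtFilter isOpen_Ioi x hx)
    (hf.continuousAt (isOpen_Ioi.mem_nhds hx))

/-- with `lam := (1/(2M[a,b]))·(c₁/s(b) − c₂/s(a) + 2∫_a^b h m)`, the function
`u(x) = c₁x + ∫_a^x 2 s(t) (∫_t^b (c₁ μ(y) + h(y) − lam) m(y) dy) dt` is C² on `[a,b]` and
solves the Neumann boundary value problem; moreover `lam > 0` under the positivity condition. -/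
theorem stmt0 (μ σ h : ℝ → ℝ)
    (hμc : ContinuousOn μ (Ioi 0)) (hσc : ContinuousOn σ (Ioi 0))
    (hhc : ContinuousOn h (Ioi 0))
    (hσpos : ∀ x > (0:ℝ), 0 < σ x) (hhnn : ∀ x > (0:ℝ), 0 ≤ h x)
    (c₁ c₂ a b lam : ℝ) (hc₁ : 0 < c₁) (hc₁₂ : c₁ < c₂)
    (ha : 0 < a) (hab : a < b)
    (hlam : lam = 1 / (2 * Mspeed μ σ a b) *
      (c₁ / sden μ σ b - c₂ / sden μ σ a + 2 * ∫ y in a..b, h y * mden μ σ y))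
    (u : ℝ → ℝ)
    (hu : u = fun x => c₁ * x +
      ∫ t in a..x, 2 * sden μ σ t * ∫ y in t..b, (c₁ * μ y + h y - lam) * mden μ σ y) :
    ContDiffOn ℝ 2 u (Icc a b) ∧
    (∀ x ∈ Ioo a b,
      (1 / 2) * (σ x) ^ 2 * deriv (deriv u) x + μ x * deriv u x + h x = lam) ∧
    deriv u a = c₂ ∧ deriv u b = c₁ ∧
    ((∫ y in a..b, h y * mden μ σ y) + c₁ / (2 * sden μ σ b) - c₂ / (2 * sden μ σ a) > 0 →
      0 < lam) := by
  have hb : (0:ℝ) < b := ha.trans hab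
  set q : ℝ → ℝ := fun y => 2 * μ y / (σ y) ^ 2 with hq_def
  have hσne : ∀ x ∈ Ioi (0:ℝ), (σ x) ^ 2 ≠ 0 := fun x hx => pow_ne_zero 2 (hσpos x hx).ne'
  have hqc : ContinuousOn q (Ioi 0) :=
    (continuousOn_const.mul hμc).div (hσc.pow 2) hσne
  have hspos : ∀ x, 0 < sden μ σ x := fun x => Real.exp_pos _
  have hsne : ∀ x, sden μ σ x ≠ 0 := fun x => (hspos x).ne'
  -- derivative of the scale density
  have hI : ∀ x ∈ Ioi (0:ℝ), HasDerivAt (fun t => ∫ y in (1:ℝ)..t, q y) (q x) x :=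
    fun x hx => hasDerivAt_primitive_of_contOn hqc one_pos hx
  have hsden_eq : sden μ σ = fun t => Real.exp (-(∫ y in (1:ℝ)..t, q y)) := rfl
  have hs' : ∀ x ∈ Ioi (0:ℝ), HasDerivAt (sden μ σ) (-q x * sden μ σ x) x := by
    intro x hx
    have h1 := ((hI x hx).neg).exp
    rw [hsden_eq]
    convert h1 using 1
    rfl
    exact mul_comm _ _
  have hIcont : ContinuousOn (fun t => ∫ y in (1:ℝ)..t, q y) (Ioi 0) :=
    fun x hx => ((hI x hx).continuousAt).continuousWithinAt
  have hsc : ContinuousOn (sden μ σ) (Ioi 0) := by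
    rw [hsden_eq]
    exact Real.continuous_exp.comp_continuousOn hIcont.neg
  have hmpos : ∀ x ∈ Ioi (0:ℝ), 0 < mden μ σ x := by
    intro x hx
    exact one_div_pos.2 (mul_pos (pow_pos (hσpos x hx) 2) (hspos x))
  have hmc : ContinuousOn (mden μ σ) (Ioi 0) :=
    continuousOn_const.div ((hσc.pow 2).mul hsc)
      (fun x hx => mul_ne_zero (hσne x hx) (hsne x))
  -- derivative of 1/s
  have hG : ∀ x ∈ Ioi (0:ℝ),
      HasDerivAt (fun t => Real.exp (∫ y in (1:ℝ)..t, q y)) (2 * μ x * mden μ σ x) x := by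
    intro x hx
    have h1 := (hI x hx).exp
    have h2 : Real.exp (∫ y in (1:ℝ)..x, q y) * q x = 2 * μ x * mden μ σ x := by
      have : Real.exp (∫ y in (1:ℝ)..x, q y) = (sden μ σ x)⁻¹ := by
        rw [sden, Real.exp_neg, inv_inv]
      rw [this, mden, hq_def]
      field_simp
    rwa [h2] at h1
  have hGs : ∀ x, Real.exp (∫ y in (1:ℝ)..x, q y) = 1 / sden μ σ x := by
    intro x
    rw [sden, Real.exp_neg, one_div, inv_inv]
  -- ∫ 2 μ m = 1/s(b) - 1/s(a)
  have hμm_int : IntervalIntegrable (fun y => 2 * μ y * mden μ σ y) volume a b :=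
    intInt_of_contOn ((continuousOn_const.mul hμc).mul hmc) ha hb
  have hμm : (∫ y in a..b, 2 * μ y * mden μ σ y) = 1 / sden μ σ b - 1 / sden μ σ a := by
    have := intervalIntegral.integral_eq_sub_of_hasDerivAt
      (f := fun t => Real.exp (∫ y in (1:ℝ)..t, q y))
      (f' := fun y => 2 * μ y * mden μ σ y)
      (fun x hx => hG x (uIcc_subset_Ioi_zero ha hb hx)) hμm_int
    rw [this]
    simp only [hGs]
  -- positivity of M
  have hm_int : IntervalIntegrable (mden μ σ) volume a b := intInt_of_contOn hmc ha hb
  have hMpos : 0 < Mspeed μ σ a b :=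
    intervalIntegral.intervalIntegral_pos_of_pos_on hm_int
      (fun x hx => hmpos x (ha.trans hx.1)) hab
  have hMne : Mspeed μ σ a b ≠ 0 := hMpos.ne'
  -- lam * M
  have hlamM : lam * Mspeed μ σ a b =
      (c₁ / sden μ σ b - c₂ / sden μ σ a) / 2 + ∫ y in a..b, h y * mden μ σ y := by
    rw [hlam]; field_simp
  -- the inner function f and F
  set f : ℝ → ℝ := fun y => (c₁ * μ y + h y - lam) * mden μ σ y with hf_def
  have hfc : ContinuousOn f (Ioi 0) :=
    (((continuousOn_const.mul hμc).add hhc).sub continuousOn_const).mul hmc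
  set F : ℝ → ℝ := fun t => ∫ y in t..b, f y with hF_def
  have hhm_int : IntervalIntegrable (fun y => h y * mden μ σ y) volume a b :=
    intInt_of_contOn (hhc.mul hmc) ha hb
  -- F a
  have hFa : F a = (c₂ - c₁) / (2 * sden μ σ a) := by
    have hsplit : (∫ y in a..b, f y) =
        (c₁ / 2) * (∫ y in a..b, 2 * μ y * mden μ σ y) +
          (∫ y in a..b, h y * mden μ σ y) - lam * Mspeed μ σ a b := by
      rw [← intervalIntegral.integral_const_mul, Mspeed, ← intervalIntegral.integral_const_mul,
        ← intervalIntegral.integral_add (hμm_int.const_mul _) hhm_int,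
        ← intervalIntegral.integral_sub
          ((hμm_int.const_mul _).add hhm_int) (hm_int.const_mul _)]
      apply intervalIntegral.integral_congr
      intro y _
      simp only [hf_def]
      ring
    rw [hF_def]
    simp only
    rw [hsplit, hμm, hlamM]
    field_simp
    ring
  have hFb : F b = 0 := by simp [hF_def]
  -- derivative of F
  have hF' : ∀ x ∈ Ioi (0:ℝ), HasDerivAt F (-(f x)) x := by
    intro x hx
    have heq : ∀ t ∈ Ioi (0:ℝ), F t = (∫ y in a..b, f y) - ∫ y in a..t, f y := by
      intro t ht
      have h1 : IntervalIntegrable f volume t a := intInt_of_contOn hfc ht ha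
      have h2 : IntervalIntegrable f volume a b := intInt_of_contOn hfc ha hb
      have := intervalIntegral.integral_add_adjacent_intervals h1 h2
      rw [hF_def]
      simp only
      rw [← this, intervalIntegral.integral_symm a t]
      ring
    have hd : HasDerivAt (fun t => (∫ y in a..b, f y) - ∫ y in a..t, f y) (-(f x)) x := by
      exact (hasDerivAt_primitive_of_contOn hfc ha hx).const_sub (∫ y in a..b, f y)
    apply hd.congr_of_eventuallyEq
    filter_upwards [isOpen_Ioi.mem_nhds hx] with t ht using heq t ht
  have hFcont : ContinuousOn F (Ioi 0) :=
    fun x hx => ((hF' x hx).continuousAt).continuousWithinAt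
  -- g and its derivative
  set g : ℝ → ℝ := fun t => 2 * sden μ σ t * F t with hg_def
  have hgc : ContinuousOn g (Ioi 0) := (continuousOn_const.mul hsc).mul hFcont
  have hg' : ∀ x ∈ Ioi (0:ℝ),
      HasDerivAt g (2 * (-q x * sden μ σ x) * F x + 2 * sden μ σ x * -(f x)) x := by
    intro x hx
    exact ((hs' x hx).const_mul 2).mul (hF' x hx)
  -- derivative of u
  have hu' : ∀ x ∈ Ioi (0:ℝ), HasDerivAt u (c₁ + g x) x := by
    intro x hx
    rw [hu]
    have h1 : HasDerivAt (fun x : ℝ => c₁ * x) c₁ x := by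
      simpa using (hasDerivAt_id x).const_mul c₁
    exact h1.add (hasDerivAt_primitive_of_contOn hgc ha hx)
  have hderivu : ∀ x ∈ Ioi (0:ℝ), deriv u x = c₁ + g x := fun x hx => (hu' x hx).deriv
  -- second derivative of u
  have hderiv2 : ∀ x ∈ Ioi (0:ℝ),
      deriv (deriv u) x = 2 * (-q x * sden μ σ x) * F x + 2 * sden μ σ x * -(f x) := by
    intro x hx
    have hev : deriv u =ᶠ[𝓝 x] fun t => c₁ + g t := by
      filter_upwards [isOpen_Ioi.mem_nhds hx] with t ht using hderivu t ht
    rw [hev.deriv_eq]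
    exact ((hg' x hx).const_add c₁).deriv
  -- deriv g is continuous on Ioi 0
  have hgderivc : ContinuousOn (deriv g) (Ioi 0) := by
    have hform : ContinuousOn
        (fun x => 2 * (-q x * sden μ σ x) * F x + 2 * sden μ σ x * -(f x)) (Ioi 0) := by
      exact ((continuousOn_const.mul (hqc.neg.mul hsc)).mul hFcont).add
        ((continuousOn_const.mul hsc).mul hfc.neg)
    exact hform.congr (fun x hx => (hg' x hx).deriv)
  -- C² on Ioi 0
  have hC2 : ContDiffOn ℝ 2 u (Ioi 0) := by
    have h2 : (2 : WithTop ℕ∞) = 1 + 1 := by norm_num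
    rw [h2, contDiffOn_succ_iff_deriv_of_isOpen isOpen_Ioi]
    refine ⟨fun x hx => ((hu' x hx).differentiableAt).differentiableWithinAt, by simp, ?_⟩
    have hg1 : ContDiffOn ℝ 1 g (Ioi 0) := by
      have h1 : (1 : WithTop ℕ∞) = 0 + 1 := by norm_num
      rw [h1, contDiffOn_succ_iff_deriv_of_isOpen isOpen_Ioi]
      refine ⟨fun x hx => ((hg' x hx).differentiableAt).differentiableWithinAt, by simp, ?_⟩
      rw [contDiffOn_zero]
      exact hgderivc
    exact (contDiffOn_const.add hg1).congr hderivu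
  refine ⟨hC2.mono (fun x hx => lt_of_lt_of_le ha hx.1), ?_, ?_, ?_, ?_⟩
  · -- the ODE
    intro x hx
    have hx0 : x ∈ Ioi (0:ℝ) := ha.trans hx.1
    rw [hderiv2 x hx0, hderivu x hx0]
    simp only [hg_def, hf_def, hq_def, mden]
    have hσx : σ x ≠ 0 := (hσpos x hx0).ne'
    have hsx : sden μ σ x ≠ 0 := hsne x
    field_simp
    ring
  · -- deriv u a = c₂
    rw [hderivu a ha]
    simp only [hg_def]
    rw [hFa]
    field_simp [hsne a]
    ring
  · -- deriv u b = c₁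
    rw [hderivu b hb]
    simp only [hg_def]
    rw [hFb]
    ring
  · -- positivity
    intro hpos
    rw [hlam]
    have hE : c₁ / sden μ σ b - c₂ / sden μ σ a + 2 * (∫ y in a..b, h y * mden μ σ y) =
        2 * ((∫ y in a..b, h y * mden μ σ y) + c₁ / (2 * sden μ σ b) -
          c₂ / (2 * sden μ σ a)) := by
      field_simp [hsne a, hsne b]
      ring
    rw [hE]
    have h1 : 0 < 1 / (2 * Mspeed μ σ a b) := by positivity
    have h2 : 0 < 2 * ((∫ y in a..b, h y * mden μ σ y) + c₁ / (2 * sden μ σ b) -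
        c₂ / (2 * sden μ σ a)) := by linarith
    exact mul_pos h1 h2
end

section
/- Suppose V : (0,∞) → ℝ is twice continuously differentiable and there exist 0 < a < b such that: r V(x) − (1/2)σ(x)² V''(x) − μ(x) V'(x) − h(x) = 0 and c₁ ≤ V'(x) ≤ c₂ for all x ∈ (a,b); V'(x) = c₂ for x ∈ (0,a]; and V'(x) = c₁ for x ∈ [b,∞). Then the function w := V' belongs to C¹((0,∞)) ∩ C²((0,∞) \ {a,b}) and satisfies: (1/2)σ(x)² w''(x) + (σ(x)σ'(x) + μ(x)) w'(x) − (r − μ'(x)) w(x) + h'(x) = 0 for x ∈ (a,b); c₁ ≤ w(x) ≤ c₂ for x ∈ (a,b); w(x) = c₂ and w'(x) = 0 for x ∈ (0,a]; and w(x) = c₁ and w'(x) = 0 for x ∈ [b,∞). -/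
open Real MeasureTheory Set Filter Topology intervalIntegral

/-- if `V` is C² on `(0,∞)`, solves `rV − σ²V''/2 − μV' − h = 0` with
`c₁ ≤ V' ≤ c₂` on `(a,b)`, and `V' = c₂` on `(0,a]`, `V' = c₁` on `[b,∞)`, then `w := V'`
is `C¹((0,∞)) ∩ C²((0,∞)\{a,b})` and satisfies the stated first-order system. -/
theorem stmt4 (μ σ h : ℝ → ℝ)
    (hμ1 : ContDiffOn ℝ 1 μ (Ioi 0)) (hσ1 : ContDiffOn ℝ 1 σ (Ioi 0))
    (hh1 : ContDiffOn ℝ 1 h (Ioi 0)) (hσpos : ∀ x > (0:ℝ), 0 < σ x)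
    (r c₁ c₂ a b : ℝ) (hr : 0 < r) (hc₁ : 0 < c₁) (hc₁₂ : c₁ < c₂)
    (ha : 0 < a) (hab : a < b)
    (V : ℝ → ℝ) (hV : ContDiffOn ℝ 2 V (Ioi 0))
    (hode : ∀ x ∈ Ioo a b,
      r * V x - (1 / 2) * (σ x) ^ 2 * deriv (deriv V) x - μ x * deriv V x - h x = 0)
    (hbd : ∀ x ∈ Ioo a b, c₁ ≤ deriv V x ∧ deriv V x ≤ c₂)
    (hlo : ∀ x ∈ Ioc (0:ℝ) a, deriv V x = c₂)
    (hhi : ∀ x ∈ Ici b, deriv V x = c₁) :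
    ContDiffOn ℝ 1 (deriv V) (Ioi 0) ∧
    ContDiffOn ℝ 2 (deriv V) (Ioi 0 \ {a, b}) ∧
    (∀ x ∈ Ioo a b,
      (1 / 2) * (σ x) ^ 2 * deriv (deriv (deriv V)) x
        + (σ x * deriv σ x + μ x) * deriv (deriv V) x
        - (r - deriv μ x) * deriv V x + deriv h x = 0) ∧
    (∀ x ∈ Ioo a b, c₁ ≤ deriv V x ∧ deriv V x ≤ c₂) ∧
    (∀ x ∈ Ioc (0:ℝ) a, deriv V x = c₂ ∧ deriv (deriv V) x = 0) ∧
    (∀ x ∈ Ici b, deriv V x = c₁ ∧ deriv (deriv V) x = 0) := by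
  have hopen : IsOpen (Ioi (0:ℝ)) := isOpen_Ioi
  have hb : (0:ℝ) < b := ha.trans hab
  have hV' : ContDiffOn ℝ (1+1) V (Ioi 0) := by
    convert hV using 2
    norm_num
  have hw1 : ContDiffOn ℝ 1 (deriv V) (Ioi 0) :=
    ((contDiffOn_succ_iff_deriv_of_isOpen hopen).1 hV').2.2
  have hwdiff : DifferentiableOn ℝ (deriv V) (Ioi 0) := hw1.differentiableOn one_ne_zero
  have hwAt : ∀ x ∈ Ioi (0:ℝ), DifferentiableAt ℝ (deriv V) x := fun x hx =>
    (hwdiff x hx).differentiableAt (hopen.mem_nhds hx)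
  have hVAt : ∀ x ∈ Ioi (0:ℝ), DifferentiableAt ℝ V x := fun x hx =>
    ((hV.differentiableOn (by norm_num)) x hx).differentiableAt (hopen.mem_nhds hx)
  have hsub : Ioo a b ⊆ Ioi (0:ℝ) := fun y hy => lt_trans ha hy.1
  -- deriv (deriv V) equals an explicit C¹ function on (a,b)
  set g : ℝ → ℝ := fun x => 2 * (r * V x - μ x * deriv V x - h x) / (σ x) ^ 2 with hg
  have hgeq : ∀ x ∈ Ioo a b, deriv (deriv V) x = g x := by
    intro x hx
    have hσx : σ x ≠ 0 := (hσpos x (hsub hx)).ne'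
    have := hode x hx
    rw [hg]
    field_simp
    linarith [this]
  have hgC1 : ContDiffOn ℝ 1 g (Ioo a b) := by
    apply ContDiffOn.div
    · exact contDiffOn_const.mul
        (((contDiffOn_const.mul ((hV.of_le (by norm_num)).mono hsub)).sub
          ((hμ1.mono hsub).mul (hw1.mono hsub))).sub (hh1.mono hsub))
    · exact (hσ1.mono hsub).pow 2
    · intro y hy; exact pow_ne_zero 2 (hσpos y (hsub hy)).ne'
  have hwC2ab : ContDiffOn ℝ 2 (deriv V) (Ioo a b) := by
    have : ContDiffOn ℝ (1+1) (deriv V) (Ioo a b) := by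
      refine (contDiffOn_succ_iff_deriv_of_isOpen isOpen_Ioo).2
        ⟨hwdiff.mono hsub, by simp, ?_⟩
      exact hgC1.congr hgeq
    convert this using 2
    norm_num
  have hw3 : ∀ x ∈ Ioo a b, DifferentiableAt ℝ (deriv (deriv V)) x := by
    intro x hx
    have h1 : ContDiffOn ℝ 1 (deriv (deriv V)) (Ioo a b) :=
      ((contDiffOn_succ_iff_deriv_of_isOpen isOpen_Ioo).1
        (show ContDiffOn ℝ (1+1) (deriv V) (Ioo a b) by convert hwC2ab using 2; norm_num)).2.2
    exact ((h1.differentiableOn one_ne_zero) x hx).differentiableAt (isOpen_Ioo.mem_nhds hx)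
  have hσAt : ∀ x ∈ Ioi (0:ℝ), DifferentiableAt ℝ σ x := fun x hx =>
    ((hσ1.differentiableOn one_ne_zero) x hx).differentiableAt (hopen.mem_nhds hx)
  have hμAt : ∀ x ∈ Ioi (0:ℝ), DifferentiableAt ℝ μ x := fun x hx =>
    ((hμ1.differentiableOn one_ne_zero) x hx).differentiableAt (hopen.mem_nhds hx)
  have hhAt : ∀ x ∈ Ioi (0:ℝ), DifferentiableAt ℝ h x := fun x hx =>
    ((hh1.differentiableOn one_ne_zero) x hx).differentiableAt (hopen.mem_nhds hx)
  refine ⟨hw1, ?_, ?_, hbd, ?_, ?_⟩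
  · -- C² away from {a, b}
    apply contDiffOn_of_locally_contDiffOn
    intro x hx
    obtain ⟨hx0, hxab⟩ := hx
    have hxa : x ≠ a := fun hxa => hxab (by simp [hxa])
    have hxb : x ≠ b := fun hxb => hxab (by simp [hxb])
    rcases lt_trichotomy x a with hlt | heq | hgt
    · refine ⟨Ioo 0 a, isOpen_Ioo, ⟨hx0, hlt⟩, ?_⟩
      refine (contDiffOn_const (c := c₂)).congr ?_
      intro y hy; exact hlo y ⟨hy.2.1, hy.2.2.le⟩
    · exact absurd heq hxa
    · rcases lt_trichotomy x b with hltb | heqb | hgtb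
      · exact ⟨Ioo a b, isOpen_Ioo, ⟨hgt, hltb⟩, hwC2ab.mono inter_subset_right⟩
      · exact absurd heqb hxb
      · refine ⟨Ioi b, isOpen_Ioi, hgtb, ?_⟩
        refine (contDiffOn_const (c := c₁)).congr ?_
        intro y hy; exact hhi y (mem_Ici.2 hy.2.le)
  · -- the differentiated ODE
    intro x hx
    have hx0 : x ∈ Ioi (0:ℝ) := hsub hx
    have hV1 : HasDerivAt V (deriv V x) x := (hVAt x hx0).hasDerivAt
    have hV2 : HasDerivAt (deriv V) (deriv (deriv V) x) x := (hwAt x hx0).hasDerivAt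
    have hV3 : HasDerivAt (deriv (deriv V)) (deriv (deriv (deriv V)) x) x :=
      (hw3 x hx).hasDerivAt
    have hσd : HasDerivAt σ (deriv σ x) x := (hσAt x hx0).hasDerivAt
    have hμd : HasDerivAt μ (deriv μ x) x := (hμAt x hx0).hasDerivAt
    have hhd : HasDerivAt h (deriv h x) x := (hhAt x hx0).hasDerivAt
    have hF : HasDerivAt
        (fun y => r * V y - 1 / 2 * σ y ^ 2 * deriv (deriv V) y - μ y * deriv V y - h y)
        ((r * deriv V x)
          - (((1/2) * (2 * σ x ^ 1 * deriv σ x)) * deriv (deriv V) x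
              + (1/2) * σ x ^ 2 * deriv (deriv (deriv V)) x)
          - (deriv μ x * deriv V x + μ x * deriv (deriv V) x)
          - deriv h x) x := by
      exact (((hV1.const_mul r).sub (((hσd.pow 2).const_mul (1/2)).mul hV3)).sub
        (hμd.mul hV2)).sub hhd
    have hF0 : HasDerivAt
        (fun y => r * V y - 1 / 2 * σ y ^ 2 * deriv (deriv V) y - μ y * deriv V y - h y)
        0 x := by
      refine (hasDerivAt_const x (0:ℝ)).congr_of_eventuallyEq ?_
      filter_upwards [isOpen_Ioo.mem_nhds hx] with y hy using hode y hy
    have hE := hF.unique hF0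
    linear_combination -hE
  · -- on (0, a]
    intro x hx
    refine ⟨hlo x hx, ?_⟩
    rcases eq_or_lt_of_le hx.2 with rfl | hlt
    · have hU : UniqueDiffWithinAt ℝ (Iic x) x := uniqueDiffOn_Iic x x self_mem_Iic
      have h1 : HasDerivWithinAt (deriv V) (deriv (deriv V) x) (Iic x) x :=
        ((hwAt x hx.1).hasDerivAt).hasDerivWithinAt
      have hmem : Ioc (0:ℝ) x ∈ 𝓝[Iic x] x :=
        mem_nhdsWithin.2 ⟨Ioi 0, isOpen_Ioi, hx.1, fun y hy => ⟨hy.1, hy.2⟩⟩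
      have hev : deriv V =ᶠ[𝓝[Iic x] x] (fun _ => c₂) := by
        filter_upwards [hmem] with y hy using hlo y hy
      have h2 : HasDerivWithinAt (deriv V) 0 (Iic x) x :=
        (hasDerivWithinAt_const x (Iic x) c₂).congr_of_eventuallyEq hev (hlo x hx)
      rw [← h1.derivWithin hU, h2.derivWithin hU]
    · have hev : deriv V =ᶠ[𝓝 x] fun _ => c₂ := by
        filter_upwards [isOpen_Ioo.mem_nhds (show x ∈ Ioo (0:ℝ) a from ⟨hx.1, hlt⟩)] with y hy
        exact hlo y ⟨hy.1, hy.2.le⟩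
      rw [hev.deriv_eq, deriv_const]
  · -- on [b, ∞)
    intro x hx
    refine ⟨hhi x hx, ?_⟩
    rcases eq_or_lt_of_le (mem_Ici.1 hx) with rfl | hlt
    · have hU : UniqueDiffWithinAt ℝ (Ici b) b := uniqueDiffOn_Ici b b self_mem_Ici
      have h1 : HasDerivWithinAt (deriv V) (deriv (deriv V) b) (Ici b) b :=
        ((hwAt b (by exact hb)).hasDerivAt).hasDerivWithinAt
      have h2 : HasDerivWithinAt (deriv V) 0 (Ici b) b :=
        (hasDerivWithinAt_const b (Ici b) c₁).congr_of_mem (fun y hy => hhi y hy) self_mem_Ici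
      rw [← h1.derivWithin hU, h2.derivWithin hU]
    · have hev : deriv V =ᶠ[𝓝 x] fun _ => c₁ := by
        filter_upwards [isOpen_Ioi.mem_nhds hlt] with y hy
        exact hhi y (mem_Ici.2 hy.le)
      rw [hev.deriv_eq, deriv_const]
end

section
/- Suppose there are constants 0 < r₀ < 1 and 0 < K₁ < K₂ < ∞ such that for every r ∈ (0, r₀] there exist K₁ ≤ a_r < b_r ≤ K₂ and a function w_r ∈ C¹((0,∞)) ∩ C²((0,∞) \ {a_r, b_r}) satisfying: (1/2)σ(x)² w_r''(x) + (σ(x)σ'(x) + μ(x)) w_r'(x) − (r − μ'(x)) w_r(x) + h'(x) = 0 for x ∈ (a_r, b_r); c₁ ≤ w_r(x) ≤ c₂ for x ∈ (a_r, b_r); w_r(x) = c₂ and w_r'(x) = 0 for x ≤ a_r; and w_r(x) = c₁ and w_r'(x) = 0 for x ≥ b_r. Then there exist a sequence r_n ↓ 0, constants a_*, b_* with K₁ ≤ a_* < b_* ≤ K₂, the constant l₀ := c₂ μ(a_*) + h(a_*), and a continuously differentiable function w₀ on (0,∞) such that a_{r_n} → a_*, b_{r_n} → b_*, and: (1/2)σ(x)²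 w₀'(x) + μ(x) w₀(x) + h(x) = l₀ for x ∈ (a_*, b_*); c₁ ≤ w₀(x) ≤ c₂ for x ∈ (a_*, b_*); w₀(x) = c₂ and w₀'(x) = 0 for x ≤ a_*; and w₀(x) = c₁ and w₀'(x) = 0 for x ≥ b_*. -/
open Real MeasureTheory Set Filter Topology intervalIntegral

set_option maxHeartbeats 1000000 in
/-- vanishing discount limit.  Given uniformly localized free boundaries
`K₁ ≤ a_r < b_r ≤ K₂` and solutions `w_r` of the discounted first-order system for each
`r ∈ (0,r₀]`, there are a sequence `r_n ↓ 0`, limits `a_* < b_*`, the constant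
`l₀ = c₂ μ(a_*) + h(a_*)`, and a C¹ function `w₀` solving the ergodic first-order system. -/
theorem stmt5 (μ σ h : ℝ → ℝ)
    (hμ1 : ContDiffOn ℝ 1 μ (Ioi 0)) (hσ1 : ContDiffOn ℝ 1 σ (Ioi 0))
    (hh1 : ContDiffOn ℝ 1 h (Ioi 0))
    (hσpos : ∀ a b : ℝ, 0 < a → a ≤ b → ∃ ε > (0:ℝ), ∀ x ∈ Icc a b, ε ≤ (σ x) ^ 2)
    (c₁ c₂ : ℝ) (hc₁ : 0 < c₁) (hc₁₂ : c₁ < c₂)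
    (r₀ K₁ K₂ : ℝ) (hr₀ : 0 < r₀) (hr₀1 : r₀ < 1) (hK₁ : 0 < K₁) (hK : K₁ < K₂)
    (af bf : ℝ → ℝ) (w : ℝ → ℝ → ℝ)
    (habd : ∀ r ∈ Ioc (0:ℝ) r₀, K₁ ≤ af r ∧ af r < bf r ∧ bf r ≤ K₂)
    (hwreg : ∀ r ∈ Ioc (0:ℝ) r₀,
      ContDiffOn ℝ 1 (w r) (Ioi 0) ∧ ContDiffOn ℝ 2 (w r) (Ioi 0 \ {af r, bf r}))
    (hwode : ∀ r ∈ Ioc (0:ℝ) r₀, ∀ x ∈ Ioo (af r) (bf r),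
      (1 / 2) * (σ x) ^ 2 * deriv (deriv (w r)) x
        + (σ x * deriv σ x + μ x) * deriv (w r) x
        - (r - deriv μ x) * w r x + deriv h x = 0)
    (hwbd : ∀ r ∈ Ioc (0:ℝ) r₀, ∀ x ∈ Ioo (af r) (bf r), c₁ ≤ w r x ∧ w r x ≤ c₂)
    (hwlo : ∀ r ∈ Ioc (0:ℝ) r₀, ∀ x : ℝ, x ≤ af r → w r x = c₂ ∧ deriv (w r) x = 0)
    (hwhi : ∀ r ∈ Ioc (0:ℝ) r₀, ∀ x : ℝ, bf r ≤ x → w r x = c₁ ∧ deriv (w r) x = 0) :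
    ∃ (rn : ℕ → ℝ) (astar bstar : ℝ) (w₀ : ℝ → ℝ),
      (∀ n, rn n ∈ Ioc (0:ℝ) r₀) ∧ StrictAnti rn ∧ Tendsto rn atTop (𝓝 0) ∧
      K₁ ≤ astar ∧ astar < bstar ∧ bstar ≤ K₂ ∧
      Tendsto (fun n => af (rn n)) atTop (𝓝 astar) ∧
      Tendsto (fun n => bf (rn n)) atTop (𝓝 bstar) ∧
      ContDiffOn ℝ 1 w₀ (Ioi 0) ∧
      (∀ x ∈ Ioo astar bstar,
        (1 / 2) * (σ x) ^ 2 * deriv w₀ x + μ x * w₀ x + h x = c₂ * μ astar + h astar) ∧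
      (∀ x ∈ Ioo astar bstar, c₁ ≤ w₀ x ∧ w₀ x ≤ c₂) ∧
      (∀ x : ℝ, x ≤ astar → w₀ x = c₂ ∧ deriv w₀ x = 0) ∧
      (∀ x : ℝ, bstar ≤ x → w₀ x = c₁ ∧ deriv w₀ x = 0) := by
  classical
  have hc₂ : (0:ℝ) < c₂ := hc₁.trans hc₁₂
  have hK₂ : (0:ℝ) < K₂ := hK₁.trans hK
  have hIcc : Icc K₁ K₂ ⊆ Ioi (0:ℝ) := fun x hx => lt_of_lt_of_le hK₁ hx.1
  have hμc : ContinuousOn μ (Ioi 0) := hμ1.continuousOn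
  have hhc : ContinuousOn h (Ioi 0) := hh1.continuousOn
  have hσc : ContinuousOn σ (Ioi 0) := hσ1.continuousOn
  obtain ⟨ε, hε, hεle⟩ := hσpos K₁ K₂ hK₁ hK.le
  have hσne : ∀ x : ℝ, 0 < x → σ x ^ 2 ≠ 0 := by
    intro x hx
    obtain ⟨ε', hε', hle⟩ := hσpos x x hx le_rfl
    exact (lt_of_lt_of_le hε' (hle x ⟨le_rfl, le_rfl⟩)).ne'
  obtain ⟨Mμ, hMμ⟩ := isCompact_Icc.exists_bound_of_continuousOn (hμc.mono hIcc)
  obtain ⟨Mh, hMh⟩ := isCompact_Icc.exists_bound_of_continuousOn (hhc.mono hIcc)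
  have hMμ0 : 0 ≤ Mμ := (norm_nonneg _).trans (hMμ K₁ ⟨le_rfl, hK.le⟩)
  have hMh0 : 0 ≤ Mh := (norm_nonneg _).trans (hMh K₁ ⟨le_rfl, hK.le⟩)
  have hMμ' : ∀ x ∈ Icc K₁ K₂, |μ x| ≤ Mμ := fun x hx => hMμ x hx
  have hMh' : ∀ x ∈ Icc K₁ K₂, |h x| ≤ Mh := fun x hx => hMh x hx
  set M : ℝ := 2 * (c₂ * Mμ + Mh) + c₂ * K₂ + 1 with hMdef
  have hM0 : 0 < M := by positivity
  set C : ℝ := 2 * M / ε + 1 with hCdef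
  have hC0 : 0 < C := by positivity
  -- boundary points in the box
  have hafm : ∀ r ∈ Ioc (0:ℝ) r₀, af r ∈ Icc K₁ K₂ := fun r hr =>
    ⟨(habd r hr).1, (habd r hr).2.1.le.trans (habd r hr).2.2⟩
  have hbfm : ∀ r ∈ Ioc (0:ℝ) r₀, bf r ∈ Icc K₁ K₂ := fun r hr =>
    ⟨(habd r hr).1.trans (habd r hr).2.1.le, (habd r hr).2.2⟩
  have haf0 : ∀ r ∈ Ioc (0:ℝ) r₀, (0:ℝ) < af r := fun r hr => hK₁.trans_le (habd r hr).1
  -- global bounds on w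
  have habs : ∀ r ∈ Ioc (0:ℝ) r₀, ∀ x : ℝ, c₁ ≤ w r x ∧ w r x ≤ c₂ := by
    intro r hr x
    rcases le_or_gt x (af r) with hx | hx
    · rcases hwlo r hr x hx with ⟨e, _⟩
      exact ⟨by rw [e]; exact hc₁₂.le, le_of_eq e⟩
    rcases le_or_gt (bf r) x with hx' | hx'
    · rcases hwhi r hr x hx' with ⟨e, _⟩
      exact ⟨le_of_eq e.symm, by rw [e]; exact hc₁₂.le⟩
    exact hwbd r hr x ⟨hx, hx'⟩
  have habsabs : ∀ r ∈ Ioc (0:ℝ) r₀, ∀ x : ℝ, |w r x| ≤ c₂ := fun r hr x =>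
    abs_le.2 ⟨by linarith [(habs r hr x).1], (habs r hr x).2⟩
  -- differentiability and continuity of w r on all of ℝ
  have hwdiff : ∀ r ∈ Ioc (0:ℝ) r₀, Differentiable ℝ (w r) := by
    intro r hr x
    rcases lt_or_ge 0 x with hx | hx
    · exact ((hwreg r hr).1.differentiableOn one_ne_zero).differentiableAt (isOpen_Ioi.mem_nhds hx)
    · have haf : x < af r := lt_of_le_of_lt hx (haf0 r hr)
      have hev : w r =ᶠ[𝓝 x] fun _ => c₂ :=
        eventually_of_mem (Iio_mem_nhds haf) (fun y hy => (hwlo r hr y (le_of_lt hy)).1)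
      exact (differentiableAt_const c₂).congr_of_eventuallyEq hev
  have hwc : ∀ r ∈ Ioc (0:ℝ) r₀, Continuous (w r) := fun r hr => (hwdiff r hr).continuous
  -- key integrated identity
  have hkey : ∀ r ∈ Ioc (0:ℝ) r₀, ∀ x ∈ Ioc (af r) (bf r),
      (1/2) * σ x ^ 2 * deriv (w r) x + μ x * w r x + h x
        = (c₂ * μ (af r) + h (af r)) + r * ∫ t in (af r)..x, w r t := by
    intro r hr x hx
    have hw'c : ContinuousOn (deriv (w r)) (Ioi 0) :=
      (hwreg r hr).1.continuousOn_deriv_of_isOpen isOpen_Ioi le_rfl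
    have hFc : ContinuousOn (fun y => (1/2) * σ y ^ 2 * deriv (w r) y + μ y * w r y + h y)
        (Ioi 0) :=
      (((continuousOn_const.mul (hσc.pow 2)).mul hw'c).add
        (hμc.mul (hwc r hr).continuousOn)).add hhc
    have hsopen : IsOpen (Ioi (0:ℝ) \ {af r, bf r}) :=
      isOpen_Ioi.sdiff (Set.Finite.isClosed (by simp))
    have hw2 : ContDiffOn ℝ 1 (deriv (w r)) (Ioi 0 \ {af r, bf r}) :=
      (hwreg r hr).2.deriv_of_isOpen hsopen (by norm_num)
    have hFd : ∀ t ∈ Ioo (af r) (bf r),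
        HasDerivAt (fun y => (1/2) * σ y ^ 2 * deriv (w r) y + μ y * w r y + h y)
          (r * w r t) t := by
      intro t ht
      have ht0 : (0:ℝ) < t := (haf0 r hr).trans ht.1
      have hts : t ∈ Ioi (0:ℝ) \ {af r, bf r} := ⟨ht0, by simp [ht.1.ne', ht.2.ne]⟩
      have hσd : HasDerivAt σ (deriv σ t) t :=
        (((hσ1.differentiableOn one_ne_zero).differentiableAt (isOpen_Ioi.mem_nhds ht0))).hasDerivAt
      have hμd : HasDerivAt μ (deriv μ t) t :=
        (((hμ1.differentiableOn one_ne_zero).differentiableAt (isOpen_Ioi.mem_nhds ht0))).hasDerivAt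
      have hhd : HasDerivAt h (deriv h t) t :=
        (((hh1.differentiableOn one_ne_zero).differentiableAt (isOpen_Ioi.mem_nhds ht0))).hasDerivAt
      have hwd : HasDerivAt (w r) (deriv (w r) t) t := ((hwdiff r hr) t).hasDerivAt
      have hw'd : HasDerivAt (deriv (w r)) (deriv (deriv (w r)) t) t :=
        ((hw2.differentiableOn one_ne_zero).differentiableAt (hsopen.mem_nhds hts)).hasDerivAt
      have hder := (((hσd.fun_pow 2).const_mul ((1:ℝ)/2)).fun_mul hw'd).fun_add (hμd.fun_mul hwd) |>.fun_add hhd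
      refine hder.congr_deriv (Eq.symm ?_)
      push_cast
      linear_combination -hwode r hr t ht
    have hle : af r ≤ x := hx.1.le
    have hsub : Icc (af r) x ⊆ Ioi (0:ℝ) := fun y hy => (haf0 r hr).trans_le hy.1
    have hint : IntervalIntegrable (fun t => r * w r t) volume (af r) x :=
      (continuous_const.mul (hwc r hr)).intervalIntegrable _ _
    have hFTC := integral_eq_sub_of_hasDeriv_right_of_le hle (hFc.mono hsub)
      (fun t ht => (hFd t ⟨ht.1, lt_of_lt_of_le ht.2 hx.2⟩).hasDerivWithinAt) hint
    rw [intervalIntegral.integral_const_mul] at hFTC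
    have e1 : w r (af r) = c₂ := (hwlo r hr (af r) le_rfl).1
    have e2 : deriv (w r) (af r) = 0 := (hwlo r hr (af r) le_rfl).2
    simp only [e1, e2] at hFTC
    linarith [hFTC]
  -- first-order form integrand
  set fr : ℝ → ℝ → ℝ := fun r t =>
    2 * ((c₂ * μ (af r) + h (af r)) + r * (∫ s in (af r)..t, w r s) - μ t * w r t - h t)
      / σ t ^ 2 with hfrdef
  have hfrcont : ∀ r ∈ Ioc (0:ℝ) r₀, ContinuousOn (fr r) (Ioi 0) := by
    intro r hr
    have hprim : Continuous fun t => ∫ s in (af r)..t, w r s :=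
      intervalIntegral.continuous_primitive (fun a b => (hwc r hr).intervalIntegrable a b) _
    exact (continuousOn_const.mul
      (((continuousOn_const.add (continuous_const.mul hprim).continuousOn).sub
        (hμc.mul (hwc r hr).continuousOn)).sub hhc)).div
      (hσc.pow 2) (fun t ht => hσne t ht)
  have hfrbd : ∀ r ∈ Ioc (0:ℝ) r₀, ∀ t ∈ Icc K₁ K₂, |fr r t| ≤ 2 * M / ε := by
    intro r hr t ht
    have hIb : |∫ s in (af r)..t, w r s| ≤ c₂ * |t - af r| := by
      simpa [Real.norm_eq_abs] using
        intervalIntegral.norm_integral_le_of_norm_le_const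
          (C := c₂) (f := w r) (a := af r) (b := t)
          (fun s _ => by simpa [Real.norm_eq_abs] using habsabs r hr s)
    have htaf : |t - af r| ≤ K₂ := by
      have h1 := (hafm r hr).1
      have h2 := (hafm r hr).2
      exact abs_le.2 ⟨by linarith [ht.1, ht.2], by linarith [ht.1, ht.2]⟩
    have hr1 : r ≤ 1 := hr.2.trans hr₀1.le
    have hrI : |r * ∫ s in (af r)..t, w r s| ≤ c₂ * K₂ := by
      rw [abs_mul, abs_of_pos hr.1]
      calc r * |∫ s in (af r)..t, w r s| ≤ 1 * (c₂ * |t - af r|) := by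
            apply mul_le_mul hr1 hIb (abs_nonneg _) zero_le_one
        _ ≤ c₂ * K₂ := by rw [one_mul]; exact mul_le_mul_of_nonneg_left htaf hc₂.le
    have hμw : |μ t * w r t| ≤ Mμ * c₂ := by
      rw [abs_mul]
      exact mul_le_mul (hMμ' t ht) (habsabs r hr t) (abs_nonneg _) hMμ0
    have hnum : |(c₂ * μ (af r) + h (af r)) + r * (∫ s in (af r)..t, w r s)
        - μ t * w r t - h t| ≤ M := by
      have h1 : |c₂ * μ (af r)| ≤ c₂ * Mμ := by
        rw [abs_mul, abs_of_pos hc₂]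
        exact mul_le_mul_of_nonneg_left (hMμ' _ (hafm r hr)) hc₂.le
      have h2 := hMh' _ (hafm r hr)
      have h3 := hMh' t ht
      have c1 := abs_le.1 h1; have c2 := abs_le.1 h2; have c3 := abs_le.1 h3
      have c4 := abs_le.1 hrI; have c5 := abs_le.1 hμw
      rw [hMdef]
      exact abs_le.2 ⟨by linarith [c1.1, c2.1, c3.2, c4.1, c5.2],
        by linarith [c1.2, c2.2, c3.1, c4.2, c5.1]⟩
    have hσt : ε ≤ σ t ^ 2 := hεle t ht
    rw [hfrdef]
    simp only [abs_div, abs_mul]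
    rw [abs_of_nonneg (by positivity : (0:ℝ) ≤ σ t ^ 2)]
    apply div_le_div₀ (by positivity) ?_ hε hσt
    rw [abs_two]
    exact mul_le_mul_of_nonneg_left hnum (by norm_num)
  have hderiveq : ∀ r ∈ Ioc (0:ℝ) r₀, ∀ t ∈ Ioo (af r) (bf r), deriv (w r) t = fr r t := by
    intro r hr t ht
    have hk := hkey r hr t ⟨ht.1, ht.2.le⟩
    have ht0 : (0:ℝ) < t := (haf0 r hr).trans ht.1
    have hne := hσne t ht0
    rw [hfrdef]
    exact (eq_div_iff hne).2 (by linarith [hk])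
  -- integral equation for w r
  have hwint : ∀ r ∈ Ioc (0:ℝ) r₀, ∀ x ∈ Icc (af r) (bf r),
      w r x = c₂ + ∫ t in (af r)..x, fr r t := by
    intro r hr x hx
    have hsub : Icc (af r) x ⊆ Ioi (0:ℝ) := fun y hy => (haf0 r hr).trans_le hy.1
    have hint : IntervalIntegrable (fr r) volume (af r) x := by
      apply ((hfrcont r hr).mono ?_).intervalIntegrable
      rw [uIcc_of_le hx.1]
      exact hsub
    have hFTC := integral_eq_sub_of_hasDeriv_right_of_le hx.1
      ((hwc r hr).continuousOn) (f' := fr r)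
      (fun t ht => by
        have htoo : t ∈ Ioo (af r) (bf r) := ⟨ht.1, lt_of_lt_of_le ht.2 hx.2⟩
        exact ((hderiveq r hr t htoo) ▸ ((hwdiff r hr) t).hasDerivAt).hasDerivWithinAt) hint
    rw [hFTC, (hwlo r hr (af r) le_rfl).1]
    ring
  -- uniform derivative bound and Lipschitz property
  have hdb : ∀ r ∈ Ioc (0:ℝ) r₀, ∀ x : ℝ, |deriv (w r) x| ≤ C := by
    intro r hr x
    rcases le_or_gt x (af r) with hx | hx
    · rw [(hwlo r hr x hx).2]; simp; linarith [hC0]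
    rcases le_or_gt (bf r) x with hx' | hx'
    · rw [(hwhi r hr x hx').2]; simp; linarith [hC0]
    rw [hderiveq r hr x ⟨hx, hx'⟩, hCdef]
    have hxm : x ∈ Icc K₁ K₂ := ⟨(hafm r hr).1.trans hx.le, hx'.le.trans (habd r hr).2.2⟩
    linarith [hfrbd r hr x hxm]
  have hlip : ∀ r ∈ Ioc (0:ℝ) r₀, ∀ x y : ℝ, |w r x - w r y| ≤ C * |x - y| := by
    intro r hr x y
    have hl : LipschitzWith (Real.toNNReal C) (w r) := by
      apply lipschitzWith_of_nnnorm_deriv_le (hwdiff r hr)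
      intro x
      refine NNReal.coe_le_coe.1 ?_
      rw [coe_nnnorm, Real.coe_toNNReal _ hC0.le, Real.norm_eq_abs]
      exact hdb r hr x
    have := hl.dist_le_mul x y
    rwa [Real.dist_eq, Real.dist_eq, Real.coe_toNNReal _ hC0.le] at this
  -- choice of sequence and subsequence extraction
  set q : ℕ → ℝ := fun n => r₀ / (n + 1) with hqdef
  have hqmem : ∀ n, q n ∈ Ioc (0:ℝ) r₀ := by
    intro n
    constructor
    · positivity
    · rw [div_le_iff₀ (by positivity)]
      nlinarith [Nat.cast_nonneg (α := ℝ) n]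
  have hqanti : StrictAnti q := by
    intro m n hmn
    apply div_lt_div_of_pos_left hr₀ (by positivity)
    exact_mod_cast Nat.succ_lt_succ hmn
  have hq0 : Tendsto q atTop (𝓝 0) := by
    have := tendsto_one_div_add_atTop_nhds_zero_nat.const_mul r₀
    rw [mul_zero] at this
    refine this.congr fun n => by rw [hqdef]; ring
  set s : Set (ℝ × ℝ × (ℚ → ℝ)) :=
    Icc K₁ K₂ ×ˢ (Icc K₁ K₂ ×ˢ Set.univ.pi fun _ : ℚ => Icc c₁ c₂) with hsdef
  have hscomp : IsCompact s :=
    isCompact_Icc.prod (isCompact_Icc.prod (isCompact_univ_pi fun _ => isCompact_Icc))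
  have hmem : ∀ n, (af (q n), bf (q n), fun t : ℚ => w (q n) t) ∈ s := by
    intro n
    refine ⟨hafm _ (hqmem n), hbfm _ (hqmem n), fun t _ => ?_⟩
    exact ⟨(habs _ (hqmem n) t).1, (habs _ (hqmem n) t).2⟩
  obtain ⟨L, hLs, φ, hφ, hconv⟩ := hscomp.tendsto_subseq hmem
  set rn : ℕ → ℝ := fun n => q (φ n) with hrndef
  set astar : ℝ := L.1 with hastar
  set bstar : ℝ := L.2.1 with hbstar
  have hrnmem : ∀ n, rn n ∈ Ioc (0:ℝ) r₀ := fun n => hqmem (φ n)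
  have hrnanti : StrictAnti rn := hqanti.comp_strictMono hφ
  have hrn0 : Tendsto rn atTop (𝓝 0) := hq0.comp hφ.tendsto_atTop
  have hA : Tendsto (fun n => af (rn n)) atTop (𝓝 astar) :=
    (continuous_fst.tendsto L).comp hconv
  have hB : Tendsto (fun n => bf (rn n)) atTop (𝓝 bstar) :=
    ((continuous_fst.comp continuous_snd).tendsto L).comp hconv
  have hQ : ∀ t : ℚ, Tendsto (fun n => w (rn n) t) atTop (𝓝 (L.2.2 t)) := fun t =>
    (((continuous_apply t).comp (continuous_snd.comp continuous_snd)).tendsto L).comp hconv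
  have hKa : K₁ ≤ astar := hLs.1.1
  have haK : astar ≤ K₂ := hLs.1.2
  have hKb : K₁ ≤ bstar := hLs.2.1.1
  have hbK : bstar ≤ K₂ := hLs.2.1.2
  have ha0 : (0:ℝ) < astar := hK₁.trans_le hKa
  have hb0 : (0:ℝ) < bstar := hK₁.trans_le hKb
  -- pointwise limit W
  have hcauchy : ∀ x : ℝ, CauchySeq fun n => w (rn n) x := by
    intro x
    rw [Metric.cauchySeq_iff]
    intro δ hδ
    obtain ⟨t, ht⟩ := exists_rat_near x (show (0:ℝ) < δ / (4 * C) by positivity)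
    have hct : CauchySeq fun n => w (rn n) t := (hQ t).cauchySeq
    rw [Metric.cauchySeq_iff] at hct
    obtain ⟨N, hN⟩ := hct (δ / 2) (by positivity)
    refine ⟨N, fun m hm n hn => ?_⟩
    have h1 := hlip (rn m) (hrnmem m) x t
    have h2 := hlip (rn n) (hrnmem n) t x
    have h3 := hN m hm n hn
    rw [Real.dist_eq] at h3 ⊢
    have hxt : |x - (t:ℝ)| ≤ δ / (4 * C) := ht.le
    have e1 : |w (rn m) x - w (rn n) x| ≤
        |w (rn m) x - w (rn m) t| + |w (rn m) t - w (rn n) t| + |w (rn n) t - w (rn n) x| := by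
      have := abs_sub_le (w (rn m) x) (w (rn m) t) (w (rn n) x)
      have := abs_sub_le (w (rn m) t) (w (rn n) t) (w (rn n) x)
      calc |w (rn m) x - w (rn n) x| ≤
          |w (rn m) x - w (rn m) t| + |w (rn m) t - w (rn n) x| :=
            abs_sub_le _ _ _
        _ ≤ |w (rn m) x - w (rn m) t| + (|w (rn m) t - w (rn n) t| + |w (rn n) t - w (rn n) x|) := by
            linarith [abs_sub_le (w (rn m) t) (w (rn n) t) (w (rn n) x)]
        _ = _ := by ring
    have hCx : C * |x - (t:ℝ)| ≤ δ / 4 := by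
      have := mul_le_mul_of_nonneg_left hxt hC0.le
      calc C * |x - (t:ℝ)| ≤ C * (δ / (4 * C)) := this
        _ = δ / 4 := by field_simp
    have habs2 : |(t:ℝ) - x| = |x - (t:ℝ)| := abs_sub_comm _ _
    have hCx2 : C * |(t:ℝ) - x| ≤ δ / 4 := by rw [habs2]; exact hCx
    refine lt_of_le_of_lt e1 ?_
    have b1 := le_trans h1 hCx
    have b3 := le_trans h2 hCx2
    linarith only [b1, b3, h3]
  set W : ℝ → ℝ := fun x => limUnder atTop fun n => w (rn n) x with hWdef
  have hWt : ∀ x, Tendsto (fun n => w (rn n) x) atTop (𝓝 (W x)) := fun x =>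
    (hcauchy x).tendsto_limUnder
  -- basic properties of W
  have hWb : ∀ x : ℝ, c₁ ≤ W x ∧ W x ≤ c₂ := fun x =>
    ⟨ge_of_tendsto (hWt x) (Eventually.of_forall fun n => (habs _ (hrnmem n) x).1),
     le_of_tendsto (hWt x) (Eventually.of_forall fun n => (habs _ (hrnmem n) x).2)⟩
  have hWlip : ∀ x y : ℝ, |W x - W y| ≤ C * |x - y| := by
    intro x y
    refine le_of_tendsto ((hWt x).sub (hWt y)).abs
      (Eventually.of_forall fun n => hlip _ (hrnmem n) x y)
  have hWcont : Continuous W := by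
    have : LipschitzWith (Real.toNNReal C) W := by
      apply LipschitzWith.of_dist_le_mul
      intro x y
      rw [Real.dist_eq, Real.dist_eq, Real.coe_toNNReal _ hC0.le]
      exact hWlip x y
    exact this.continuous
  have hWlo : ∀ x : ℝ, x ≤ astar → W x = c₂ := by
    intro x hx
    have hb : ∀ n, |w (rn n) x - c₂| ≤ C * |af (rn n) - astar| := by
      intro n
      rcases le_or_gt x (af (rn n)) with hc | hc
      · rw [(hwlo _ (hrnmem n) x hc).1]
        simp; positivity
      · have e1 : w (rn n) (af (rn n)) = c₂ := (hwlo _ (hrnmem n) (af (rn n)) le_rfl).1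
        have := hlip _ (hrnmem n) x (af (rn n))
        rw [e1] at this
        refine this.trans ?_
        apply mul_le_mul_of_nonneg_left _ hC0.le
        rw [abs_of_nonneg (by linarith : (0:ℝ) ≤ x - af (rn n)),
          abs_of_nonpos (by linarith : af (rn n) - astar ≤ 0)]
        linarith
    have hz : Tendsto (fun n => C * |af (rn n) - astar|) atTop (𝓝 0) := by
      have h1 : Tendsto (fun n => af (rn n) - astar) atTop (𝓝 0) := by
        simpa using hA.sub (tendsto_const_nhds (x := astar))
      have := (h1.abs.const_mul C)
      simpa using this
    have : Tendsto (fun n => w (rn n) x - c₂) atTop (𝓝 0) :=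
      squeeze_zero_norm (fun n => by simpa [Real.norm_eq_abs] using hb n) hz
    have h2 : Tendsto (fun n => w (rn n) x) atTop (𝓝 c₂) := by
      simpa using this.add (tendsto_const_nhds (x := c₂))
    exact tendsto_nhds_unique (hWt x) h2
  have hWhi : ∀ x : ℝ, bstar ≤ x → W x = c₁ := by
    intro x hx
    have hb : ∀ n, |w (rn n) x - c₁| ≤ C * |bf (rn n) - bstar| := by
      intro n
      rcases le_or_gt (bf (rn n)) x with hc | hc
      · rw [(hwhi _ (hrnmem n) x hc).1]
        simp; positivity
      · have e1 : w (rn n) (bf (rn n)) = c₁ := (hwhi _ (hrnmem n) (bf (rn n)) le_rfl).1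
        have := hlip _ (hrnmem n) x (bf (rn n))
        rw [e1] at this
        refine this.trans ?_
        apply mul_le_mul_of_nonneg_left _ hC0.le
        rw [abs_of_nonpos (by linarith), abs_of_nonneg (by linarith : (0:ℝ) ≤ bf (rn n) - bstar)]
        linarith
    have hz : Tendsto (fun n => C * |bf (rn n) - bstar|) atTop (𝓝 0) := by
      have h1 : Tendsto (fun n => bf (rn n) - bstar) atTop (𝓝 0) := by
        simpa using hB.sub (tendsto_const_nhds (x := bstar))
      simpa using h1.abs.const_mul C
    have : Tendsto (fun n => w (rn n) x - c₁) atTop (𝓝 0) :=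
      squeeze_zero_norm (fun n => by simpa [Real.norm_eq_abs] using hb n) hz
    have h2 : Tendsto (fun n => w (rn n) x) atTop (𝓝 c₁) := by
      simpa using this.add (tendsto_const_nhds (x := c₁))
    exact tendsto_nhds_unique (hWt x) h2
  -- astar < bstar
  have hab : astar < bstar := by
    have h1 : ∀ n, c₂ - c₁ ≤ C * (bf (rn n) - af (rn n)) := by
      intro n
      have e1 : w (rn n) (af (rn n)) = c₂ := (hwlo _ (hrnmem n) (af (rn n)) le_rfl).1
      have e2 : w (rn n) (bf (rn n)) = c₁ := (hwhi _ (hrnmem n) (bf (rn n)) le_rfl).1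
      have := hlip _ (hrnmem n) (af (rn n)) (bf (rn n))
      rw [e1, e2] at this
      have hlt := (habd _ (hrnmem n)).2.1
      rw [abs_of_nonneg (by linarith), abs_of_nonpos (by linarith)] at this
      linarith
    have h2 : Tendsto (fun n => C * (bf (rn n) - af (rn n))) atTop (𝓝 (C * (bstar - astar))) :=
      (hB.sub hA).const_mul C
    have h3 : c₂ - c₁ ≤ C * (bstar - astar) :=
      ge_of_tendsto h2 (Eventually.of_forall h1)
    nlinarith [hC0]
  -- the limit identity  μ(b*) c₁ + h(b*) = l₀
  have hμca : ContinuousAt μ astar := hμc.continuousAt (isOpen_Ioi.mem_nhds ha0)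
  have hhca : ContinuousAt h astar := hhc.continuousAt (isOpen_Ioi.mem_nhds ha0)
  have hμcb : ContinuousAt μ bstar := hμc.continuousAt (isOpen_Ioi.mem_nhds hb0)
  have hhcb : ContinuousAt h bstar := hhc.continuousAt (isOpen_Ioi.mem_nhds hb0)
  have hbid : μ bstar * c₁ + h bstar = c₂ * μ astar + h astar := by
    have hfull : ∀ n, μ (bf (rn n)) * c₁ + h (bf (rn n))
        = (c₂ * μ (af (rn n)) + h (af (rn n))) + rn n * ∫ t in (af (rn n))..(bf (rn n)), w (rn n) t := by
      intro n
      have hk := hkey _ (hrnmem n) (bf (rn n)) ⟨(habd _ (hrnmem n)).2.1, le_rfl⟩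
      have e1 : w (rn n) (bf (rn n)) = c₁ := (hwhi _ (hrnmem n) (bf (rn n)) le_rfl).1
      have e2 : deriv (w (rn n)) (bf (rn n)) = 0 := (hwhi _ (hrnmem n) (bf (rn n)) le_rfl).2
      rw [e1, e2] at hk
      linarith [hk]
    have hLHS : Tendsto (fun n => μ (bf (rn n)) * c₁ + h (bf (rn n))) atTop
        (𝓝 (μ bstar * c₁ + h bstar)) :=
      ((hμcb.tendsto.comp hB).mul_const c₁).add (hhcb.tendsto.comp hB)
    have hint0 : Tendsto (fun n => rn n * ∫ t in (af (rn n))..(bf (rn n)), w (rn n) t) atTop (𝓝 0) := by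
      apply squeeze_zero_norm (a := fun n => c₂ * K₂ * rn n)
      · intro n
        have hIb : |∫ t in (af (rn n))..(bf (rn n)), w (rn n) t| ≤ c₂ * |bf (rn n) - af (rn n)| := by
          simpa [Real.norm_eq_abs] using
            intervalIntegral.norm_integral_le_of_norm_le_const
              (C := c₂) (f := w (rn n)) (a := af (rn n)) (b := bf (rn n))
              (fun s _ => by simpa [Real.norm_eq_abs] using habsabs _ (hrnmem n) s)
        have hd : |bf (rn n) - af (rn n)| ≤ K₂ := by
          have h1 := (hafm _ (hrnmem n)); have h2 := (hbfm _ (hrnmem n))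
          exact abs_le.2 ⟨by linarith [h1.1, h1.2, h2.1, h2.2], by linarith [h1.1, h1.2, h2.1, h2.2]⟩
        rw [Real.norm_eq_abs, abs_mul, abs_of_pos (hrnmem n).1]
        calc rn n * |∫ t in (af (rn n))..(bf (rn n)), w (rn n) t|
            ≤ rn n * (c₂ * K₂) :=
              mul_le_mul_of_nonneg_left (hIb.trans (by nlinarith [hc₂])) (hrnmem n).1.le
          _ = c₂ * K₂ * rn n := by ring
      · simpa using hrn0.const_mul (c₂ * K₂)
    have hRHS : Tendsto (fun n => (c₂ * μ (af (rn n)) + h (af (rn n)))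
        + rn n * ∫ t in (af (rn n))..(bf (rn n)), w (rn n) t) atTop
        (𝓝 ((c₂ * μ astar + h astar) + 0)) :=
      (((hμca.tendsto.comp hA).const_mul c₂).add (hhca.tendsto.comp hA)).add hint0
    rw [add_zero] at hRHS
    exact tendsto_nhds_unique (hLHS.congr hfull) hRHS
  -- limit integrand
  set f : ℝ → ℝ := fun t => 2 * ((c₂ * μ astar + h astar) - μ t * W t - h t) / σ t ^ 2
    with hfdef
  have hfptw : ∀ t : ℝ, 0 < t → Tendsto (fun n => fr (rn n) t) atTop (𝓝 (f t)) := by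
    intro t ht0
    have hA' : Tendsto (fun n => c₂ * μ (af (rn n)) + h (af (rn n))) atTop
        (𝓝 (c₂ * μ astar + h astar)) :=
      ((hμca.tendsto.comp hA).const_mul c₂).add (hhca.tendsto.comp hA)
    have hI : Tendsto (fun n => rn n * ∫ s in (af (rn n))..t, w (rn n) s) atTop (𝓝 0) := by
      apply squeeze_zero_norm (a := fun n => c₂ * (|t| + K₂) * rn n)
      · intro n
        have hIb : |∫ s in (af (rn n))..t, w (rn n) s| ≤ c₂ * |t - af (rn n)| := by
          simpa [Real.norm_eq_abs] using
            intervalIntegral.norm_integral_le_of_norm_le_const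
              (C := c₂) (f := w (rn n)) (a := af (rn n)) (b := t)
              (fun s _ => by simpa [Real.norm_eq_abs] using habsabs _ (hrnmem n) s)
        have hd : |t - af (rn n)| ≤ |t| + K₂ := by
          have h2 := hafm _ (hrnmem n)
          have := abs_sub (t) (af (rn n))
          have haf : |af (rn n)| ≤ K₂ := abs_le.2 ⟨by linarith [h2.1, hK₁], h2.2⟩
          calc |t - af (rn n)| ≤ |t| + |af (rn n)| := abs_sub _ _
            _ ≤ |t| + K₂ := by linarith
        rw [Real.norm_eq_abs, abs_mul, abs_of_pos (hrnmem n).1]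
        calc rn n * |∫ s in (af (rn n))..t, w (rn n) s|
            ≤ rn n * (c₂ * (|t| + K₂)) := by
              apply mul_le_mul_of_nonneg_left _ (hrnmem n).1.le
              exact hIb.trans (mul_le_mul_of_nonneg_left hd hc₂.le)
          _ = c₂ * (|t| + K₂) * rn n := by ring
      · simpa using hrn0.const_mul (c₂ * (|t| + K₂))
    have hnum := (((hA'.add hI).sub ((hWt t).const_mul (μ t))).sub
      (tendsto_const_nhds (x := h t))).const_mul (2:ℝ)
    have := hnum.div_const (σ t ^ 2)
    rw [hfrdef, hfdef]
    simp only []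
    simpa using this
  have hfbd : ∀ t ∈ Icc K₁ K₂, |f t| ≤ 2 * M / ε := by
    intro t ht
    refine le_of_tendsto (hfptw t (hIcc ht)).abs
      (Eventually.of_forall fun n => hfrbd _ (hrnmem n) t ht)
  have hfc : ContinuousOn f (Ioi 0) := by
    rw [hfdef]
    exact (continuousOn_const.mul ((continuousOn_const.sub
      (hμc.mul hWcont.continuousOn)).sub hhc)).div (hσc.pow 2) (fun t ht => hσne t ht)
  have hfint : ∀ u v : ℝ, u ∈ Icc K₁ K₂ → v ∈ Icc K₁ K₂ →
      IntervalIntegrable f volume u v := fun u v hu hv =>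
    (hfc.mono ((uIcc_subset_Icc hu hv).trans hIcc)).intervalIntegrable
  have hbox : ∀ y ∈ Icc astar bstar, y ∈ Icc K₁ K₂ := fun y hy =>
    ⟨hKa.trans hy.1, hy.2.trans hbK⟩
  -- integral equation for W on (astar, bstar)
  have hWioo : ∀ x ∈ Ioo astar bstar, W x = c₂ + ∫ t in astar..x, f t := by
    intro x hx
    have hx0 : (0:ℝ) < x := ha0.trans hx.1
    have hxK : x ∈ Icc K₁ K₂ := hbox x ⟨hx.1.le, hx.2.le⟩
    have haK' : astar ∈ Icc K₁ K₂ := ⟨hKa, haK⟩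
    have hev : ∀ᶠ n in atTop, af (rn n) < x ∧ x < bf (rn n) :=
      (hA.eventually (eventually_lt_nhds hx.1)).and (hB.eventually (eventually_gt_nhds hx.2))
    have hint1 : ∀ n, IntervalIntegrable (fr (rn n)) volume (af (rn n)) astar := fun n =>
      ((hfrcont _ (hrnmem n)).mono
        ((uIcc_subset_Icc (hafm _ (hrnmem n)) haK').trans hIcc)).intervalIntegrable
    have hint2 : ∀ n, IntervalIntegrable (fr (rn n)) volume astar x := fun n =>
      ((hfrcont _ (hrnmem n)).mono ((uIcc_subset_Icc haK' hxK).trans hIcc)).intervalIntegrable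
    have hp1 : Tendsto (fun n => ∫ t in (af (rn n))..astar, fr (rn n) t) atTop (𝓝 0) := by
      apply squeeze_zero_norm (a := fun n => (2 * M / ε) * |astar - af (rn n)|)
      · intro n
        apply intervalIntegral.norm_integral_le_of_norm_le_const
        intro s hs
        have hsK : s ∈ Icc K₁ K₂ :=
          uIcc_subset_Icc (hafm _ (hrnmem n)) haK' (uIoc_subset_uIcc hs)
        simpa [Real.norm_eq_abs] using hfrbd _ (hrnmem n) s hsK
      · have h1 : Tendsto (fun n => af (rn n) - astar) atTop (𝓝 0) := by
          simpa using hA.sub (tendsto_const_nhds (x := astar))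
        have h2 : Tendsto (fun n => astar - af (rn n)) atTop (𝓝 0) := by
          simpa using (tendsto_const_nhds (x := astar)).sub hA
        simpa using h2.abs.const_mul (2 * M / ε)
    have hmeas : ∀ n, AEStronglyMeasurable (fr (rn n)) (volume.restrict (uIoc astar x)) := by
      intro n
      apply ((hfrcont _ (hrnmem n)).mono ?_).aestronglyMeasurable measurableSet_uIoc
      exact (uIoc_subset_uIcc.trans ((uIcc_subset_Icc haK' hxK).trans hIcc))
    have hbound : ∀ n, ∀ᵐ s : ℝ, s ∈ uIoc astar x → ‖fr (rn n) s‖ ≤ 2 * M / ε := by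
      intro n
      apply ae_of_all
      intro s hs
      have hsK : s ∈ Icc K₁ K₂ := by
        rcases uIoc_subset_uIcc hs with hs'
        exact uIcc_subset_Icc haK' hxK hs'
      simpa [Real.norm_eq_abs] using hfrbd _ (hrnmem n) s hsK
    have hlim : ∀ᵐ s : ℝ, s ∈ uIoc astar x → Tendsto (fun n => fr (rn n) s) atTop (𝓝 (f s)) := by
      apply ae_of_all
      intro s hs
      have hsK : s ∈ Icc K₁ K₂ := uIcc_subset_Icc haK' hxK (uIoc_subset_uIcc hs)
      exact hfptw s (hIcc hsK)
    have hp2 : Tendsto (fun n => ∫ t in astar..x, fr (rn n) t) atTop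
        (𝓝 (∫ t in astar..x, f t)) :=
      intervalIntegral.tendsto_integral_filter_of_dominated_convergence
        (fun _ => 2 * M / ε) (Eventually.of_forall hmeas) (Eventually.of_forall hbound)
        (intervalIntegrable_const) hlim
    have hsum := hp1.add ((tendsto_const_nhds (x := c₂)).add hp2)
    have hevq : (fun n => w (rn n) x) =ᶠ[atTop]
        (fun n => (∫ t in (af (rn n))..astar, fr (rn n) t)
          + (c₂ + ∫ t in astar..x, fr (rn n) t)) := by
      filter_upwards [hev] with n hn
      rw [hwint _ (hrnmem n) x ⟨hn.1.le, hn.2.le⟩,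
        ← intervalIntegral.integral_add_adjacent_intervals (hint1 n) (hint2 n)]
      ring
    have := tendsto_nhds_unique (hWt x) (hsum.congr' hevq.symm)
    rw [this]; ring
  -- integral equation at bstar
  have hWbeq : W bstar = c₂ + ∫ t in astar..bstar, f t := by
    haveI : (𝓝[Ioo astar bstar] bstar).NeBot := by
      rw [← mem_closure_iff_nhdsWithin_neBot, closure_Ioo hab.ne]
      exact ⟨hab.le, le_rfl⟩
    have t1 : Tendsto W (𝓝[Ioo astar bstar] bstar) (𝓝 (W bstar)) :=
      (hWcont.tendsto bstar).mono_left nhdsWithin_le_nhds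
    have hsq : ∀ y ∈ Ioo astar bstar,
        ‖(c₂ + ∫ t in astar..y, f t) - (c₂ + ∫ t in astar..bstar, f t)‖
          ≤ (2 * M / ε) * |y - bstar| := by
      intro y hy
      have hyK : y ∈ Icc K₁ K₂ := hbox y ⟨hy.1.le, hy.2.le⟩
      have e : (c₂ + ∫ t in astar..y, f t) - (c₂ + ∫ t in astar..bstar, f t)
          = ∫ t in bstar..y, f t := by
        rw [add_sub_add_left_eq_sub]
        exact intervalIntegral.integral_interval_sub_left
          (hfint astar y ⟨hKa, haK⟩ hyK) (hfint astar bstar ⟨hKa, haK⟩ ⟨hKb, hbK⟩)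
      rw [e]
      apply intervalIntegral.norm_integral_le_of_norm_le_const
      intro s hs
      have hsK : s ∈ Icc K₁ K₂ := uIcc_subset_Icc ⟨hKb, hbK⟩ hyK (uIoc_subset_uIcc hs)
      simpa [Real.norm_eq_abs] using hfbd s hsK
    have hz : Tendsto (fun y => (2 * M / ε) * |y - bstar|) (𝓝[Ioo astar bstar] bstar) (𝓝 0) := by
      have : Tendsto (fun y : ℝ => (2 * M / ε) * |y - bstar|) (𝓝 bstar)
          (𝓝 ((2 * M / ε) * |bstar - bstar|)) :=
        (continuous_const.mul ((continuous_id.sub continuous_const).abs)).tendsto bstar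
      simpa using this.mono_left nhdsWithin_le_nhds
    have t0 : Tendsto (fun y => (c₂ + ∫ t in astar..y, f t) - (c₂ + ∫ t in astar..bstar, f t))
        (𝓝[Ioo astar bstar] bstar) (𝓝 0) :=
      squeeze_zero_norm' (eventually_mem_nhdsWithin.mono hsq) hz
    have t2 : Tendsto (fun y => c₂ + ∫ t in astar..y, f t) (𝓝[Ioo astar bstar] bstar)
        (𝓝 (c₂ + ∫ t in astar..bstar, f t)) := by
      have h' := t0.add (tendsto_const_nhds (x := c₂ + ∫ t in astar..bstar, f t))
      rw [zero_add] at h'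
      exact h'.congr fun y => by ring
    have t3 : W =ᶠ[𝓝[Ioo astar bstar] bstar] (fun y => c₂ + ∫ t in astar..y, f t) :=
      eventually_mem_nhdsWithin.mono fun y hy => hWioo y hy
    exact tendsto_nhds_unique (t1.congr' t3) t2
  -- values of f at the endpoints
  have hfat : f astar = 0 := by
    have hnum : (c₂ * μ astar + h astar) - μ astar * W astar - h astar = 0 := by
      rw [hWlo astar le_rfl]; ring
    show 2 * ((c₂ * μ astar + h astar) - μ astar * W astar - h astar) / σ astar ^ 2 = 0
    rw [hnum, mul_zero, zero_div]
  have hfbt : f bstar = 0 := by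
    have hnum : (c₂ * μ astar + h astar) - μ bstar * W bstar - h bstar = 0 := by
      rw [hWhi bstar le_rfl]; linarith [hbid]
    show 2 * ((c₂ * μ astar + h astar) - μ bstar * W bstar - h bstar) / σ bstar ^ 2 = 0
    rw [hnum, mul_zero, zero_div]
  -- clamped integrand
  set g : ℝ → ℝ := fun t => f (max astar (min bstar t)) with hgdef
  have hgc : Continuous g := by
    have hcl : Continuous fun t : ℝ => max astar (min bstar t) :=
      continuous_const.max (continuous_const.min continuous_id)
    have hmem' : ∀ t : ℝ, max astar (min bstar t) ∈ Ioi (0:ℝ) := fun t =>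
      lt_of_lt_of_le ha0 (le_max_left _ _)
    exact hfc.comp_continuous hcl hmem'
  have hgval : ∀ t, t ∈ Icc astar bstar → g t = f t := by
    intro t ht
    show f (max astar (min bstar t)) = f t
    rw [min_eq_right ht.2, max_eq_right ht.1]
  have hglo : ∀ t, t ≤ astar → g t = 0 := by
    intro t ht
    show f (max astar (min bstar t)) = 0
    rw [min_eq_right (ht.trans hab.le), max_eq_left ht, hfat]
  have hghi : ∀ t, bstar ≤ t → g t = 0 := by
    intro t ht
    show f (max astar (min bstar t)) = 0
    rw [min_eq_left ht, max_eq_right hab.le, hfbt]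
  -- global integral representation of W
  have hWeq : ∀ x : ℝ, W x = c₂ + ∫ t in astar..x, g t := by
    intro x
    rcases lt_or_ge x astar with hx | hx
    · have hEq : EqOn g (fun _ => (0:ℝ)) (uIcc astar x) := by
        intro t ht
        rw [uIcc_of_ge hx.le] at ht
        exact hglo t ht.2
      rw [hWlo x hx.le, intervalIntegral.integral_congr hEq]
      simp
    rcases le_or_gt x bstar with hx2 | hx2
    · have hWx : W x = c₂ + ∫ t in astar..x, f t := by
        rcases eq_or_lt_of_le hx with he | hlt
        · rw [← he, hWlo astar le_rfl]
          simp
        rcases eq_or_lt_of_le hx2 with he2 | hlt2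
        · rw [he2]; exact hWbeq
        · exact hWioo x ⟨hlt, hlt2⟩
      have hEq : EqOn g f (uIcc astar x) := by
        intro t ht
        rw [uIcc_of_le hx] at ht
        exact hgval t ⟨ht.1, ht.2.trans hx2⟩
      rw [hWx, intervalIntegral.integral_congr hEq]
    · have hEq1 : EqOn g f (uIcc astar bstar) := by
        intro t ht
        rw [uIcc_of_le hab.le] at ht
        exact hgval t ht
      have h1 : ∫ t in astar..bstar, g t = c₁ - c₂ := by
        rw [intervalIntegral.integral_congr hEq1]
        have hW1 : W bstar = c₁ := hWhi bstar le_rfl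
        linarith [hWbeq]
      have hEq2 : EqOn g (fun _ => (0:ℝ)) (uIcc bstar x) := by
        intro t ht
        rw [uIcc_of_le hx2.le] at ht
        exact hghi t ht.1
      have h2 : ∫ t in bstar..x, g t = 0 := by
        rw [intervalIntegral.integral_congr hEq2]
        simp
      rw [hWhi x hx2.le,
        ← intervalIntegral.integral_add_adjacent_intervals (b := bstar)
          (hgc.intervalIntegrable _ _) (hgc.intervalIntegrable _ _), h1, h2]
      ring
  have hWd : ∀ x : ℝ, HasDerivAt W (g x) x := by
    intro x
    have hprim : HasDerivAt (fun y => c₂ + ∫ t in astar..y, g t) (g x) x :=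
      (intervalIntegral.integral_hasDerivAt_right (hgc.intervalIntegrable _ _)
        (hgc.stronglyMeasurableAtFilter _ _) hgc.continuousAt).const_add c₂
    exact hprim.congr_of_eventuallyEq (Eventually.of_forall fun y => hWeq y)
  have hWderiv : ∀ x : ℝ, deriv W x = g x := fun x => (hWd x).deriv
  have hWcd : ContDiff ℝ 1 W := by
    refine contDiff_one_iff_deriv.2 ⟨fun x => (hWd x).differentiableAt, ?_⟩
    have : deriv W = g := funext hWderiv
    rw [this]; exact hgc
  refine ⟨rn, astar, bstar, W, hrnmem, hrnanti, hrn0, hKa, hab, hbK, hA, hB,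
    hWcd.contDiffOn, ?_, ?_, ?_, ?_⟩
  · intro x hx
    rw [hWderiv x, hgval x ⟨hx.1.le, hx.2.le⟩]
    have hx0 : (0:ℝ) < x := ha0.trans hx.1
    have hne := hσne x hx0
    rw [show f x = 2 * ((c₂ * μ astar + h astar) - μ x * W x - h x) / σ x ^ 2 from rfl]
    have key : σ x ^ 2 * (σ x ^ 2)⁻¹ = 1 := mul_inv_cancel₀ hne
    linear_combination (c₂ * μ astar + h astar - μ x * W x - h x) * key
  · exact fun x _ => hWb x
  · exact fun x hx => ⟨hWlo x hx, by rw [hWderiv x, hglo x hx]⟩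
  · exact fun x hx => ⟨hWhi x hx, by rw [hWderiv x, hghi x hx]⟩
end

section
/- Let μ < 0, σ > 0, and 0 < c₁ < c₂ be constants, and let h : (0,∞) → [0,∞) be continuous and satisfy the Inada condition lim_{x↓0} h(x)/x = ∞. With s(x) = x^{−2μ/σ²} and m(x) = σ^{−2} x^{2μ/σ² − 2}, there exist 0 < a < b < ∞ such that ∫_a^b h(y) m(y) dy + c₁/(2 s(b)) − c₂/(2 s(a)) > 0. -/
open Real MeasureTheory Set Filter Topology intervalIntegral

/-- for geometric Brownian motion (`μ < 0 < σ`), with scale density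
`s(x) = x^(−2μ/σ²)` and speed density `m(x) = σ⁻² x^(2μ/σ²−2)`, if the nonnegative
continuous `h` satisfies the Inada condition `h(x)/x → ∞` as `x ↓ 0`, then there are
`0 < a < b` with `∫_a^b h m + c₁/(2 s(b)) − c₂/(2 s(a)) > 0`. -/
theorem stmt7 (μ σ c₁ c₂ : ℝ) (hμ : μ < 0) (hσ : 0 < σ)
    (hc₁ : 0 < c₁) (hc₁₂ : c₁ < c₂)
    (h : ℝ → ℝ) (hhc : ContinuousOn h (Ioi 0)) (hhnn : ∀ x > (0:ℝ), 0 ≤ h x)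
    (hinada : Tendsto (fun x => h x / x) (𝓝[>] (0:ℝ)) atTop)
    (s m : ℝ → ℝ)
    (hs : ∀ x > (0:ℝ), s x = x ^ (-(2 * μ / σ ^ 2)))
    (hm : ∀ x > (0:ℝ), m x = x ^ (2 * μ / σ ^ 2 - 2) / σ ^ 2) :
    ∃ a b : ℝ, 0 < a ∧ a < b ∧
      (∫ y in a..b, h y * m y) + c₁ / (2 * s b) - c₂ / (2 * s a) > 0 := by
  have hσ2 : (0:ℝ) < σ ^ 2 := by positivity
  set p : ℝ := 2 * μ / σ ^ 2 with hp_def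
  have hp : p < 0 := div_neg_of_neg_of_pos (by linarith) hσ2
  have hnp : 0 < -p := by linarith
  set K : ℝ := c₂ * σ ^ 2 * (-p) with hK_def
  have hc₂ : 0 < c₂ := lt_trans hc₁ hc₁₂
  have hKpos : 0 < K := by positivity
  obtain ⟨δ, hδmem, hδ⟩ :=
    mem_nhdsGT_iff_exists_Ioo_subset.mp (hinada.eventually_ge_atTop K)
  have hδ0 : 0 < δ := hδmem
  set b : ℝ := δ / 2 with hb_def
  have hb0 : 0 < b := by positivity
  have hbδ : b < δ := by rw [hb_def]; linarith
  -- x ^ p → ∞ as x → 0+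
  have htend : Tendsto (fun x : ℝ => x ^ p) (𝓝[>] (0:ℝ)) atTop := by
    have h1 : Tendsto (fun x : ℝ => x⁻¹) (𝓝[>] (0:ℝ)) atTop := tendsto_inv_nhdsGT_zero
    have h2 : Tendsto (fun y : ℝ => y ^ (-p)) atTop atTop := tendsto_rpow_atTop hnp
    refine (h2.comp h1).congr' ?_
    filter_upwards [self_mem_nhdsWithin] with x hx
    have hx0 : (0:ℝ) < x := hx
    simp only [Function.comp]
    rw [Real.inv_rpow hx0.le, ← Real.rpow_neg hx0.le, neg_neg]
  set M : ℝ := (c₂ - c₁ / 2) * b ^ p with hM_def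
  have hMev : ∀ᶠ x in 𝓝[>] (0:ℝ), M < c₂ / 2 * x ^ p :=
    (htend.const_mul_atTop (by positivity : (0:ℝ) < c₂ / 2)).eventually_gt_atTop M
  have hIoo : Ioo (0:ℝ) b ∈ 𝓝[>] (0:ℝ) :=
    Ioo_mem_nhdsGT_of_mem ⟨le_refl 0, hb0⟩
  obtain ⟨a, haM, haIoo⟩ := (hMev.and (eventually_of_mem hIoo fun x hx => hx)).exists
  obtain ⟨ha0, hab⟩ := haIoo
  refine ⟨a, b, ha0, hab, ?_⟩
  have hsub : Icc a b ⊆ Ioi (0:ℝ) := fun y hy => lt_of_lt_of_le ha0 hy.1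
  -- pointwise bound on [a, b]
  have hptwise : ∀ y ∈ Icc a b, K / σ ^ 2 * y ^ (p - 1) ≤ h y * m y := by
    intro y hy
    have hy0 : (0:ℝ) < y := hsub hy
    have hyδ : y < δ := lt_of_le_of_lt hy.2 hbδ
    have hK' : K ≤ h y / y := hδ ⟨hy0, hyδ⟩
    have hhy : K * y ≤ h y := by rw [← le_div_iff₀ hy0]; exact hK'
    rw [hm y hy0]
    have hpow : y ^ (p - 1) = y * y ^ (p - 2) := by
      rw [show p - 1 = 1 + (p - 2) by ring, Real.rpow_add hy0, Real.rpow_one]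
    rw [hpow]
    have hy2 : (0:ℝ) ≤ y ^ (p - 2) := Real.rpow_nonneg hy0.le _
    have heq : K / σ ^ 2 * (y * y ^ (p - 2)) = (K * y) * (y ^ (p - 2) / σ ^ 2) := by
      ring
    rw [heq]
    exact mul_le_mul_of_nonneg_right hhy (div_nonneg hy2 hσ2.le)
  -- integrability
  have huIcc : uIcc a b = Icc a b := uIcc_of_le hab.le
  have hint_f : IntervalIntegrable (fun y => K / σ ^ 2 * y ^ (p - 1)) volume a b := by
    apply ContinuousOn.intervalIntegrable
    rw [huIcc]
    exact (continuousOn_id.rpow_const fun y hy =>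
      Or.inl (ne_of_gt (hsub hy))).const_smul (K / σ ^ 2)
  have hint_g : IntervalIntegrable (fun y => h y * m y) volume a b := by
    apply ContinuousOn.intervalIntegrable
    rw [huIcc]
    refine (hhc.mono hsub).mul ?_
    refine ContinuousOn.congr ?_ (fun y hy => hm y (hsub hy))
    exact (continuousOn_id.rpow_const fun y hy =>
      Or.inl (ne_of_gt (hsub hy))).div_const (σ ^ 2)
  have hmono : (∫ y in a..b, K / σ ^ 2 * y ^ (p - 1)) ≤ ∫ y in a..b, h y * m y :=
    intervalIntegral.integral_mono_on hab.le hint_f hint_g hptwise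
  -- compute the lower-bounding integral
  have hzero : (0:ℝ) ∉ uIcc a b := by rw [huIcc]; exact fun hc => absurd hc.1 (not_le.mpr ha0)
  have hcalc : (∫ y in a..b, K / σ ^ 2 * y ^ (p - 1))
      = K / σ ^ 2 * ((b ^ p - a ^ p) / p) := by
    rw [intervalIntegral.integral_const_mul]
    rw [integral_rpow (Or.inr ⟨by intro hc; rw [sub_eq_iff_eq_add] at hc; norm_num at hc; linarith, hzero⟩)]
    norm_num
  -- values of s
  have hsa : s a = (a ^ p)⁻¹ := by
    rw [hs a ha0, Real.rpow_neg ha0.le]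
  have hsb : s b = (b ^ p)⁻¹ := by
    rw [hs b hb0, Real.rpow_neg hb0.le]
  have hap : (0:ℝ) < a ^ p := Real.rpow_pos_of_pos ha0 p
  have hbp : (0:ℝ) < b ^ p := Real.rpow_pos_of_pos hb0 p
  have hsa' : c₂ / (2 * s a) = c₂ * a ^ p / 2 := by
    rw [hsa]; field_simp
  have hsb' : c₁ / (2 * s b) = c₁ * b ^ p / 2 := by
    rw [hsb]; field_simp
  have hKdiv : K / σ ^ 2 = c₂ * (-p) := by rw [hK_def]; field_simp
  have hpne : p ≠ 0 := ne_of_lt hp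
  clear_value p K b M
  have hKval : K / σ ^ 2 * ((b ^ p - a ^ p) / p) = c₂ * (a ^ p - b ^ p) := by
    rw [hKdiv]
    field_simp
    ring
  rw [hsa', hsb']
  rw [hcalc, hKval] at hmono
  rw [hM_def] at haM
  nlinarith [hmono, haM]
end

section
/- Let μ < 0, σ > 0, and 0 < c₁ < c₂ be constants, and let h : [0,∞) → [0,∞) be concave and nondecreasing with h(0) = 0 and finite right derivative h'(0+) at zero. If there exists c ∈ [c₁, c₂] with h'(0+) + μ c ≤ 0, then the function u(x) := c₂ x and the constant λ := 0 satisfy the Hamilton–Jacobi–Bellman equation max{ (1/2)σ² x² u''(x) + μ x u'(x) + h(x) − λ, u'(x) − c₂, −u'(x) + c₁ } = 0 for every x ≥ 0; in particular h(x) + c₂ μ x ≤ 0 for all x ≥ 0. -/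
open Real Set Filter Topology

lemma stmt8_aux (h : ℝ → ℝ) (hconc : ConcaveOn ℝ (Ici 0) h) (h0 : h 0 = 0)
    (d : ℝ) (hd : HasDerivWithinAt h d (Ici 0) 0)
    (x : ℝ) (hx : 0 ≤ x) : h x ≤ d * x := by
  rcases eq_or_lt_of_le hx with rfl | hx'
  · simp [h0]
  have hg : ConvexOn ℝ (Ici 0) (-h) := hconc.neg
  have hd' : HasDerivWithinAt (-h) (-d) (Ici 0) 0 := hd.neg
  have htend : Tendsto (slope (-h) 0) (𝓝[(Ici (0:ℝ)) \ {0}] 0) (𝓝 (-d)) :=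
    (hasDerivWithinAt_iff_tendsto_slope).mp hd'
  rw [Set.Ici_sdiff_left] at htend
  have key : -d ≤ slope (-h) 0 x := by
    refine le_of_tendsto htend ?_
    have hmem : (Ioo (0:ℝ) x) ∈ 𝓝[Ioi (0:ℝ)] 0 := Ioo_mem_nhdsGT_of_mem ⟨le_refl _, hx'⟩
    filter_upwards [hmem] with t ⟨ht1, ht2⟩
    refine hg.slope_mono (le_refl (0:ℝ)) ?_ ?_ ht2.le
    · exact ⟨le_of_lt ht1, ht1.ne'⟩
    · exact ⟨hx, hx'.ne'⟩
  have hs : slope (-h) 0 x = (-(h x)) / x := by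
    rw [slope_def_field]; simp [h0]
  rw [hs, le_div_iff₀ hx'] at key
  nlinarith

/-- for geometric Brownian motion, if the concave nondecreasing reward `h`
(with `h(0) = 0`) has finite right derivative `d = h'(0+)` at zero and `d + μ c ≤ 0` for
some `c ∈ [c₁,c₂]`, then `u(x) := c₂ x` and `λ := 0` satisfy the HJB equation
`max{σ²x²u''/2 + μxu' + h − λ, u' − c₂, −u' + c₁} = 0` on `[0,∞)`; in particular
`h(x) + c₂ μ x ≤ 0` for all `x ≥ 0`. -/
theorem stmt8 (μ σ c₁ c₂ : ℝ) (hμ : μ < 0) (hσ : 0 < σ)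
    (hc₁ : 0 < c₁) (hc₁₂ : c₁ < c₂)
    (h : ℝ → ℝ) (hnn : ∀ x ≥ (0:ℝ), 0 ≤ h x)
    (hconc : ConcaveOn ℝ (Ici 0) h) (hmono : MonotoneOn h (Ici 0)) (h0 : h 0 = 0)
    (d : ℝ) (hd : HasDerivWithinAt h d (Ici 0) 0)
    (c : ℝ) (hc : c ∈ Icc c₁ c₂) (hdc : d + μ * c ≤ 0) :
    (∀ x ≥ (0:ℝ),
      max (max ((1 / 2) * σ ^ 2 * x ^ 2 * deriv (deriv (fun y => c₂ * y)) x
            + μ * x * deriv (fun y => c₂ * y) x + h x - 0)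
          (deriv (fun y => c₂ * y) x - c₂))
        (-(deriv (fun y => c₂ * y) x) + c₁) = 0) ∧
    (∀ x ≥ (0:ℝ), h x + c₂ * μ * x ≤ 0) := by
  have hder : deriv (fun y : ℝ => c₂ * y) = fun _ => c₂ := by
    funext y
    have := ((hasDerivAt_id y).const_mul c₂).deriv
    simpa using this
  have hder2 : deriv (deriv (fun y : ℝ => c₂ * y)) = fun _ => 0 := by
    rw [hder]; funext y; exact deriv_const y c₂
  have hkey : ∀ x ≥ (0:ℝ), h x + c₂ * μ * x ≤ 0 := by
    intro x hx
    have h1 : h x ≤ d * x := stmt8_aux h hconc h0 d hd x hx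
    have h2 : d ≤ -(μ * c₂) := by nlinarith [hc.2]
    nlinarith
  refine ⟨fun x hx => ?_, hkey⟩
  rw [hder2, hder]
  have := hkey x hx
  have hA : 1 / 2 * σ ^ 2 * x ^ 2 * (fun _ : ℝ => (0:ℝ)) x
      + μ * x * (fun _ : ℝ => c₂) x + h x - 0 ≤ 0 := by
    simp only []; nlinarith
  rw [show ((fun _ : ℝ => c₂) x - c₂) = 0 by simp, max_eq_right hA,
    max_eq_left (by simp only []; linarith)]
end

section
/- For fixed b > 0, the function a ↦ λ(a,b) is differentiable on (0,b) and its partial derivative satisfies ∂λ(a,b)/∂a = (m(a)/M[a,b]) (λ(a,b) − π₂(a)) for all 0 < a < b. -/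
open Real MeasureTheory Set Filter Topology intervalIntegral

/-- The long-term average reward `λ(a,b)` of the `(a,b)`-reflection policy. -/
noncomputable def lamfun (μ σ h : ℝ → ℝ) (c₁ c₂ a b : ℝ) : ℝ :=
  1 / (2 * Mspeed μ σ a b) *
    (c₁ / sden μ σ b - c₂ / sden μ σ a + 2 * ∫ y in a..b, h y * mden μ σ y)

/-- for fixed `b > 0`, `a ↦ λ(a,b)` is differentiable on `(0,b)` with
`∂λ/∂a = (m(a)/M[a,b])(λ(a,b) − π₂(a))`, where `π₂(x) = h(x) + c₂ μ(x)`. -/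
theorem stmt10 (μ σ h : ℝ → ℝ)
    (hμc : ContinuousOn μ (Ioi 0)) (hσc : ContinuousOn σ (Ioi 0))
    (hhc : ContinuousOn h (Ioi 0))
    (hσpos : ∀ x > (0:ℝ), 0 < σ x) (hhnn : ∀ x > (0:ℝ), 0 ≤ h x)
    (c₁ c₂ : ℝ) (hc₁ : 0 < c₁) (hc₁₂ : c₁ < c₂)
    (b : ℝ) (hb : 0 < b) :
    ∀ a ∈ Ioo (0:ℝ) b,
      HasDerivAt (fun a' => lamfun μ σ h c₁ c₂ a' b)
        (mden μ σ a / Mspeed μ σ a b *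
          (lamfun μ σ h c₁ c₂ a b - (h a + c₂ * μ a))) a := by
  intro a ha
  obtain ⟨ha0, hab⟩ := ha
  set f : ℝ → ℝ := fun y => 2 * μ y / (σ y) ^ 2 with hf_def
  have hσne : ∀ x ∈ Ioi (0:ℝ), (σ x) ^ 2 ≠ 0 := fun x hx =>
    pow_ne_zero 2 (hσpos x hx).ne'
  have hf_cont : ContinuousOn f (Ioi 0) :=
    (continuousOn_const.mul hμc).div (hσc.pow 2) hσne
  -- derivative of the inner integral of the scale density
  have hF : HasDerivAt (fun x => ∫ y in (1:ℝ)..x, f y) (f a) a := by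
    apply intervalIntegral.integral_hasDerivAt_right
    · apply (hf_cont.mono ?_).intervalIntegrable
      intro x hx
      rcases Set.mem_uIcc.mp hx with h1 | h1 <;>
        exact lt_of_lt_of_le (by first | exact one_pos | exact ha0 | linarith [h1.1]) h1.1
    · exact hf_cont.stronglyMeasurableAtFilter isOpen_Ioi a ha0
    · exact hf_cont.continuousAt (Ioi_mem_nhds ha0)
  -- derivative of the scale density
  have hs : ∀ x ∈ Ioi (0:ℝ), HasDerivAt (sden μ σ)
      (sden μ σ x * (-(f x))) x := by
    intro x hx
    have hFx : HasDerivAt (fun t => ∫ y in (1:ℝ)..t, f y) (f x) x := by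
      apply intervalIntegral.integral_hasDerivAt_right
      · apply (hf_cont.mono ?_).intervalIntegrable
        intro z hz
        rcases Set.mem_uIcc.mp hz with h1 | h1 <;>
          exact lt_of_lt_of_le (by first | exact one_pos | exact hx | linarith [h1.1]) h1.1
      · exact hf_cont.stronglyMeasurableAtFilter isOpen_Ioi x hx
      · exact hf_cont.continuousAt (Ioi_mem_nhds hx)
    rw [show sden μ σ = fun t => Real.exp (-(∫ y in (1:ℝ)..t, 2 * μ y / (σ y) ^ 2)) from rfl]
    simpa [sden, hf_def] using hFx.neg.exp
  have hsa := hs a ha0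
  have hs_cont : ContinuousOn (sden μ σ) (Ioi 0) := fun x hx =>
    ((hs x hx).continuousAt).continuousWithinAt
  have hs_pos : ∀ x, 0 < sden μ σ x := fun x => Real.exp_pos _
  have hm_cont : ContinuousOn (mden μ σ) (Ioi 0) := by
    apply continuousOn_const.div ((hσc.pow 2).mul hs_cont)
    intro x hx
    exact mul_ne_zero (hσne x hx) (hs_pos x).ne'
  have hm_pos : ∀ x ∈ Ioi (0:ℝ), 0 < mden μ σ x := by
    intro x hx
    exact div_pos one_pos (mul_pos (pow_pos (hσpos x hx) 2) (hs_pos x))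
  have huIcc : Set.uIcc a b ⊆ Ioi (0:ℝ) := by
    intro x hx
    rcases Set.mem_uIcc.mp hx with h1 | h1 <;>
      exact lt_of_lt_of_le (by first | exact ha0 | exact hb | linarith [h1.1]) h1.1
  have hm_int : IntervalIntegrable (mden μ σ) volume a b :=
    (hm_cont.mono huIcc).intervalIntegrable
  have hM_pos : 0 < Mspeed μ σ a b := by
    apply intervalIntegral.intervalIntegral_pos_of_pos_on hm_int
    · intro x hx
      exact hm_pos x (lt_trans ha0 hx.1)
    · exact hab
  have hM_ne : Mspeed μ σ a b ≠ 0 := hM_pos.ne'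
  -- derivative of M
  have hM : HasDerivAt (fun a' => Mspeed μ σ a' b) (-(mden μ σ a)) a :=
    intervalIntegral.integral_hasDerivAt_left hm_int
      (hm_cont.stronglyMeasurableAtFilter isOpen_Ioi a ha0)
      (hm_cont.continuousAt (Ioi_mem_nhds ha0))
  -- derivative of G
  have hhm_cont : ContinuousOn (fun y => h y * mden μ σ y) (Ioi 0) :=
    hhc.mul hm_cont
  have hG : HasDerivAt (fun a' => ∫ y in a'..b, h y * mden μ σ y)
      (-(h a * mden μ σ a)) a :=
    intervalIntegral.integral_hasDerivAt_left
      ((hhm_cont.mono huIcc).intervalIntegrable)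
      (hhm_cont.stronglyMeasurableAtFilter isOpen_Ioi a ha0)
      (hhm_cont.continuousAt (Ioi_mem_nhds ha0))
  -- assemble
  have hDne : (2 : ℝ) * Mspeed μ σ a b ≠ 0 := by positivity
  have hinv : HasDerivAt (fun a' => (2 * Mspeed μ σ a' b)⁻¹)
      (-(2 * -(mden μ σ a)) / (2 * Mspeed μ σ a b) ^ 2) a :=
    (hM.const_mul 2).inv hDne
  have hsinv : HasDerivAt (fun a' => (sden μ σ a')⁻¹)
      (-(sden μ σ a * (-(f a))) / (sden μ σ a) ^ 2) a :=
    hsa.inv (hs_pos a).ne'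
  have hNum : HasDerivAt (fun a' => c₁ / sden μ σ b - c₂ * (sden μ σ a')⁻¹ +
      2 * ∫ y in a'..b, h y * mden μ σ y)
      (0 - c₂ * (-(sden μ σ a * (-(f a))) / (sden μ σ a) ^ 2) +
        2 * -(h a * mden μ σ a)) a :=
    ((hasDerivAt_const a (c₁ / sden μ σ b)).sub (hsinv.const_mul c₂)).add
      (hG.const_mul 2)
  have hmain := hinv.mul hNum
  have hfun : (fun a' => (2 * Mspeed μ σ a' b)⁻¹ *
      (c₁ / sden μ σ b - c₂ * (sden μ σ a')⁻¹ +
        2 * ∫ y in a'..b, h y * mden μ σ y)) =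
      fun a' => lamfun μ σ h c₁ c₂ a' b := by
    funext a'
    simp [lamfun, one_div, div_eq_mul_inv]
  simp only [Pi.mul_def] at hmain
  rw [hfun] at hmain
  refine hmain.congr_deriv ?_
  have hsane : sden μ σ a ≠ 0 := (hs_pos a).ne'
  have hσane : σ a ≠ 0 := (hσpos a ha0).ne'
  simp only [lamfun, mden, hf_def]
  field_simp
  ring
end

section
/- For fixed a > 0, the function b ↦ λ(a,b) is differentiable on (a,∞) and its partial derivative satisfies ∂λ(a,b)/∂b = (m(b)/M[a,b]) (π₁(b) − λ(a,b)) for all b > a. -/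
open Real MeasureTheory Set Filter Topology intervalIntegral

lemma uIcc_subset_Ioi' {a b : ℝ} (ha : 0 < a) (hb : 0 < b) : uIcc a b ⊆ Ioi 0 := fun _x hx =>
  lt_of_lt_of_le (lt_min ha hb) hx.1

lemma ftc_right (f : ℝ → ℝ) (hf : ContinuousOn f (Ioi 0)) {c b : ℝ} (hc : 0 < c) (hb : 0 < b) :
    HasDerivAt (fun x => ∫ y in c..x, f y) (f b) b :=
  intervalIntegral.integral_hasDerivAt_right
    ((hf.mono (uIcc_subset_Ioi' hc hb)).intervalIntegrable)
    (hf.stronglyMeasurableAtFilter isOpen_Ioi b hb)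
    (hf.continuousAt (isOpen_Ioi.mem_nhds hb))

lemma sden_pos (μ σ : ℝ → ℝ) (x : ℝ) : 0 < sden μ σ x := Real.exp_pos _

lemma fquot_contOn {μ σ : ℝ → ℝ} (hμc : ContinuousOn μ (Ioi 0)) (hσc : ContinuousOn σ (Ioi 0))
    (hσpos : ∀ x > (0:ℝ), 0 < σ x) :
    ContinuousOn (fun y => 2 * μ y / (σ y) ^ 2) (Ioi 0) :=
  (continuousOn_const.mul hμc).div (hσc.pow 2)
    (fun x hx => pow_ne_zero _ (hσpos x hx).ne')

lemma hasDerivAt_sden {μ σ : ℝ → ℝ} (hμc : ContinuousOn μ (Ioi 0)) (hσc : ContinuousOn σ (Ioi 0))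
    (hσpos : ∀ x > (0:ℝ), 0 < σ x) {b : ℝ} (hb : 0 < b) :
    HasDerivAt (sden μ σ) (-(2 * μ b / (σ b) ^ 2) * sden μ σ b) b := by
  have hg := ftc_right _ (fquot_contOn hμc hσc hσpos) one_pos hb
  have heq : sden μ σ = fun x => Real.exp (-(∫ y in (1:ℝ)..x, 2 * μ y / (σ y) ^ 2)) := rfl
  rw [heq]
  simpa [mul_comm] using hg.neg.exp

lemma sden_contOn {μ σ : ℝ → ℝ} (hμc : ContinuousOn μ (Ioi 0)) (hσc : ContinuousOn σ (Ioi 0))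
    (hσpos : ∀ x > (0:ℝ), 0 < σ x) : ContinuousOn (sden μ σ) (Ioi 0) := fun x hx =>
  (hasDerivAt_sden hμc hσc hσpos hx).continuousAt.continuousWithinAt

lemma mden_pos {μ σ : ℝ → ℝ} (hσpos : ∀ x > (0:ℝ), 0 < σ x) {x : ℝ} (hx : 0 < x) :
    0 < mden μ σ x :=
  div_pos one_pos (mul_pos (pow_pos (hσpos x hx) 2) (sden_pos μ σ x))

lemma mden_contOn {μ σ : ℝ → ℝ} (hμc : ContinuousOn μ (Ioi 0)) (hσc : ContinuousOn σ (Ioi 0))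
    (hσpos : ∀ x > (0:ℝ), 0 < σ x) : ContinuousOn (mden μ σ) (Ioi 0) :=
  continuousOn_const.div ((hσc.pow 2).mul (sden_contOn hμc hσc hσpos))
    (fun x hx => (mul_pos (pow_pos (hσpos x hx) 2) (sden_pos μ σ x)).ne')

/-- for fixed `a > 0`, `b ↦ λ(a,b)` is differentiable on `(a,∞)` with
`∂λ/∂b = (m(b)/M[a,b])(π₁(b) − λ(a,b))`, where `π₁(x) = h(x) + c₁ μ(x)`. -/
theorem stmt11 (μ σ h : ℝ → ℝ)
    (hμc : ContinuousOn μ (Ioi 0)) (hσc : ContinuousOn σ (Ioi 0))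
    (hhc : ContinuousOn h (Ioi 0))
    (hσpos : ∀ x > (0:ℝ), 0 < σ x) (hhnn : ∀ x > (0:ℝ), 0 ≤ h x)
    (c₁ c₂ : ℝ) (hc₁ : 0 < c₁) (hc₁₂ : c₁ < c₂)
    (a : ℝ) (ha : 0 < a) :
    ∀ b ∈ Ioi a,
      HasDerivAt (fun b' => lamfun μ σ h c₁ c₂ a b')
        (mden μ σ b / Mspeed μ σ a b *
          ((h b + c₁ * μ b) - lamfun μ σ h c₁ c₂ a b)) b := by
  intro b hb
  have hab : a < b := hb
  have hb0 : 0 < b := ha.trans hab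
  have hmcont := mden_contOn hμc hσc hσpos
  -- positivity of M
  have hMpos : 0 < Mspeed μ σ a b := by
    apply intervalIntegral.intervalIntegral_pos_of_pos_on
      ((hmcont.mono (uIcc_subset_Ioi' ha hb0)).intervalIntegrable)
      (fun x hx => mden_pos hσpos (ha.trans hx.1)) hab
  have hMne : Mspeed μ σ a b ≠ 0 := hMpos.ne'
  have hsbne : sden μ σ b ≠ 0 := (sden_pos μ σ b).ne'
  have hσbne : σ b ≠ 0 := (hσpos b hb0).ne'
  -- derivative of M in b
  have hM : HasDerivAt (fun b' => Mspeed μ σ a b') (mden μ σ b) b :=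
    ftc_right _ hmcont ha hb0
  -- derivative of the integral of h*m
  have hI : HasDerivAt (fun b' => ∫ y in a..b', h y * mden μ σ y) (h b * mden μ σ b) b :=
    ftc_right _ (hhc.mul hmcont) ha hb0
  -- derivative of 1/s
  have hs := hasDerivAt_sden hμc hσc hσpos hb0
  have hinvs : HasDerivAt (fun b' => c₁ / sden μ σ b')
      (c₁ * (2 * μ b / (σ b) ^ 2) / sden μ σ b) b := by
    have := (hasDerivAt_const b c₁).div hs hsbne
    refine HasDerivAt.congr_deriv this ?_
    field_simp
    ring
  -- numerator
  have hN : HasDerivAt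
      (fun b' => c₁ / sden μ σ b' - c₂ / sden μ σ a + 2 * ∫ y in a..b', h y * mden μ σ y)
      (c₁ * (2 * μ b / (σ b) ^ 2) / sden μ σ b + 2 * (h b * mden μ σ b)) b :=
    (hinvs.sub_const _).add (hI.const_mul 2)
  -- prefactor 1/(2M)
  have hpre : HasDerivAt (fun b' => 1 / (2 * Mspeed μ σ a b'))
      (-(2 * mden μ σ b) / (2 * Mspeed μ σ a b) ^ 2) b := by
    simpa [one_div] using (hM.const_mul 2).fun_inv (by positivity)
  have hfinal := hpre.mul hN
  refine HasDerivAt.congr_deriv hfinal ?_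
  simp only [lamfun, mden]
  have h2 : (σ b) ^ 2 * sden μ σ b ≠ 0 := by positivity
  field_simp
  ring
end

section
/- For any 0 < a < b < ∞: (i) λ(a,b) = π₁(b) if and only if ∫_a^b (π₁(x) − π₁(b)) m(x) dx + (c₁ − c₂)/(2 s(a)) = 0; and (ii) λ(a,b) = π₂(a) if and only if ∫_a^b (π₂(x) − π₂(a)) m(x) dx + (c₁ − c₂)/(2 s(b)) = 0. In particular, the first-order optimality condition λ(a,b) = π₁(b) = π₂(a) is equivalent to the pair of integral equations in (i) and (ii). -/
open Real MeasureTheory Set Filter Topology intervalIntegral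

/-- with `π₁(x) = h(x) + c₁μ(x)` and `π₂(x) = h(x) + c₂μ(x)`,
(i) `λ(a,b) = π₁(b)` iff `∫_a^b (π₁ − π₁(b)) m + (c₁−c₂)/(2s(a)) = 0`;
(ii) `λ(a,b) = π₂(a)` iff `∫_a^b (π₂ − π₂(a)) m + (c₁−c₂)/(2s(b)) = 0`;
and the first-order condition `λ(a,b) = π₁(b) = π₂(a)` is equivalent to the pair. -/
theorem stmt12 (μ σ h : ℝ → ℝ)
    (hμc : ContinuousOn μ (Ioi 0)) (hσc : ContinuousOn σ (Ioi 0))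
    (hhc : ContinuousOn h (Ioi 0))
    (hσpos : ∀ x > (0:ℝ), 0 < σ x) (hhnn : ∀ x > (0:ℝ), 0 ≤ h x)
    (c₁ c₂ : ℝ) (hc₁ : 0 < c₁) (hc₁₂ : c₁ < c₂)
    (a b : ℝ) (ha : 0 < a) (hab : a < b) :
    (lamfun μ σ h c₁ c₂ a b = h b + c₁ * μ b ↔
      (∫ x in a..b, ((h x + c₁ * μ x) - (h b + c₁ * μ b)) * mden μ σ x)
        + (c₁ - c₂) / (2 * sden μ σ a) = 0) ∧
    (lamfun μ σ h c₁ c₂ a b = h a + c₂ * μ a ↔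
      (∫ x in a..b, ((h x + c₂ * μ x) - (h a + c₂ * μ a)) * mden μ σ x)
        + (c₁ - c₂) / (2 * sden μ σ b) = 0) ∧
    ((lamfun μ σ h c₁ c₂ a b = h b + c₁ * μ b ∧
        lamfun μ σ h c₁ c₂ a b = h a + c₂ * μ a) ↔
      ((∫ x in a..b, ((h x + c₁ * μ x) - (h b + c₁ * μ b)) * mden μ σ x)
          + (c₁ - c₂) / (2 * sden μ σ a) = 0 ∧
        (∫ x in a..b, ((h x + c₂ * μ x) - (h a + c₂ * μ a)) * mden μ σ x)
          + (c₁ - c₂) / (2 * sden μ σ b) = 0)) := by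
  have hb0 : (0:ℝ) < b := ha.trans hab
  have hsub : uIcc a b ⊆ Ioi 0 := by
    rw [uIcc_of_le hab.le]
    exact fun x hx => lt_of_lt_of_le ha hx.1
  set f : ℝ → ℝ := fun y => 2 * μ y / (σ y) ^ 2 with hf
  have hσne : ∀ x ∈ Ioi (0:ℝ), (σ x) ^ 2 ≠ 0 := fun x hx => pow_ne_zero _ (hσpos x hx).ne'
  have hfc : ContinuousOn f (Ioi 0) :=
    (continuousOn_const.mul hμc).div (hσc.pow 2) hσne
  set E : ℝ → ℝ := fun x => Real.exp (∫ y in (1:ℝ)..x, f y) with hE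
  have hfint : ∀ t ∈ Ioi (0:ℝ), IntervalIntegrable f volume 1 t := by
    intro t ht
    apply (hfc.mono _).intervalIntegrable
    intro x hx
    exact lt_of_lt_of_le (lt_min one_pos ht) hx.1
  -- derivative of E on Ioi 0
  have hEderiv : ∀ x ∈ Ioi (0:ℝ), HasDerivAt E (E x * f x) x := by
    intro x hx
    have hg : HasDerivAt (fun t => ∫ y in (1:ℝ)..t, f y) (f x) x :=
      intervalIntegral.integral_hasDerivAt_right (hfint x hx)
        (hfc.stronglyMeasurableAtFilter isOpen_Ioi x hx)
        (hfc.continuousAt (isOpen_Ioi.mem_nhds hx))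
    exact hg.exp
  have hEcont : ContinuousOn E (Ioi 0) := fun x hx =>
    ((hEderiv x hx).continuousAt).continuousWithinAt
  -- sden and E
  have hsE : ∀ x, sden μ σ x = (E x)⁻¹ := by
    intro x
    simp only [sden, hE, Real.exp_neg, hf]
  have hsne : ∀ x, sden μ σ x ≠ 0 := fun x => Real.exp_ne_zero _
  have hmE : ∀ x, mden μ σ x = E x / (σ x) ^ 2 := by
    intro x
    rw [mden, hsE, one_div, mul_inv, inv_inv, mul_comm, ← div_eq_mul_inv]
  -- continuity of mden on Ioi 0
  have hmc : ContinuousOn (mden μ σ) (Ioi 0) :=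
    (hEcont.div (hσc.pow 2) hσne).congr fun x _ => hmE x
  -- integrability
  have Im : IntervalIntegrable (mden μ σ) volume a b := (hmc.mono hsub).intervalIntegrable
  have Ih : IntervalIntegrable (fun x => h x * mden μ σ x) volume a b :=
    (((hhc.mono hsub).mul (hmc.mono hsub))).intervalIntegrable
  have Iμ : IntervalIntegrable (fun x => μ x * mden μ σ x) volume a b :=
    (((hμc.mono hsub).mul (hmc.mono hsub))).intervalIntegrable
  -- FTC : ∫ 2 μ m = E b - E a
  have hFTC : ∫ x in a..b, E x * f x = E b - E a := by
    apply intervalIntegral.integral_eq_sub_of_hasDerivAt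
    · intro x hx
      exact hEderiv x (hsub hx)
    · apply (((hEcont.mono hsub).mul (hfc.mono hsub))).intervalIntegrable
  have hEf : ∀ x ∈ Ioi (0:ℝ), E x * f x = 2 * (μ x * mden μ σ x) := by
    intro x hx
    rw [hmE]
    field_simp [hf]
    ring
  have Hμ : ∫ x in a..b, μ x * mden μ σ x = (E b - E a) / 2 := by
    rw [← hFTC, intervalIntegral.integral_congr (g := fun x => 2 * (μ x * mden μ σ x))
      (fun x hx => hEf x (hsub hx)), intervalIntegral.integral_const_mul]
    ring
  -- positivity of Mspeed
  have hMpos : 0 < Mspeed μ σ a b := by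
    apply intervalIntegral.intervalIntegral_pos_of_pos_on Im _ hab
    intro x hx
    have hx0 : 0 < x := ha.trans hx.1
    rw [hmE]
    exact div_pos (Real.exp_pos _) (pow_pos (hσpos x hx0) 2)
  have h2M : 2 * Mspeed μ σ a b ≠ 0 := by positivity
  -- decomposition of the integrals
  have hdecomp : ∀ c K : ℝ,
      (∫ x in a..b, ((h x + c * μ x) - K) * mden μ σ x)
        = (∫ x in a..b, h x * mden μ σ x) + c * (∫ x in a..b, μ x * mden μ σ x)
          - K * Mspeed μ σ a b := by
    intro c K
    have : (∫ x in a..b, ((h x + c * μ x) - K) * mden μ σ x)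
        = ∫ x in a..b, (h x * mden μ σ x + c * (μ x * mden μ σ x) - K * mden μ σ x) := by
      apply intervalIntegral.integral_congr
      intro x _
      ring
    rw [this, intervalIntegral.integral_sub ((Ih.add (Iμ.const_mul c))) (Im.const_mul K),
      intervalIntegral.integral_add Ih (Iμ.const_mul c),
      intervalIntegral.integral_const_mul, intervalIntegral.integral_const_mul]
    rfl
  -- abbreviations
  set M := Mspeed μ σ a b
  set H := ∫ x in a..b, h x * mden μ σ x with hH
  have hHlam : (∫ y in a..b, h y * mden μ σ y) = H := rfl
  have key : ∀ c K S : ℝ, lamfun μ σ h c₁ c₂ a b = K ↔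
      (c₁ / sden μ σ b - c₂ / sden μ σ a + 2 * H) = K * (2 * M) := by
    intro c K S
    rw [lamfun, hHlam, one_div, inv_mul_eq_div, div_eq_iff h2M]
  have hdivb : c₁ / sden μ σ b = c₁ * E b := by rw [hsE]; field_simp
  have hdiva : c₂ / sden μ σ a = c₂ * E a := by rw [hsE]; field_simp
  have hEa : E a ≠ 0 := Real.exp_ne_zero _
  have hEb : E b ≠ 0 := Real.exp_ne_zero _
  have h3a : (c₁ - c₂) / (2 * sden μ σ a) = (c₁ - c₂) * E a / 2 := by
    rw [hsE a]
    field_simp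
  have h3b : (c₁ - c₂) / (2 * sden μ σ b) = (c₁ - c₂) * E b / 2 := by
    rw [hsE b]
    field_simp
  have hiff₁ : lamfun μ σ h c₁ c₂ a b = h b + c₁ * μ b ↔
      (∫ x in a..b, ((h x + c₁ * μ x) - (h b + c₁ * μ b)) * mden μ σ x)
        + (c₁ - c₂) / (2 * sden μ σ a) = 0 := by
    rw [key 0 _ 0, hdecomp c₁ (h b + c₁ * μ b), Hμ, hdivb, hdiva, h3a]
    constructor
    · intro hh
      linear_combination hh / 2
    · intro hh
      linear_combination 2 * hh
  have hiff₂ : lamfun μ σ h c₁ c₂ a b = h a + c₂ * μ a ↔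
      (∫ x in a..b, ((h x + c₂ * μ x) - (h a + c₂ * μ a)) * mden μ σ x)
        + (c₁ - c₂) / (2 * sden μ σ b) = 0 := by
    rw [key 0 _ 0, hdecomp c₂ (h a + c₂ * μ a), Hμ, hdivb, hdiva, h3b]
    constructor
    · intro hh
      linear_combination hh / 2
    · intro hh
      linear_combination 2 * hh
  exact ⟨hiff₁, hiff₂, and_congr hiff₁ hiff₂⟩
end

section
/- Suppose h, μ : (0,∞) → ℝ are continuously differentiable with h'(x) > 0 for all x > 0, let 0 < c₁ < c₂, and set π₁(x) := h(x) + c₁ μ(x) and π₂(x) := h(x) + c₂ μ(x). If for each i = 1,2 there exists x̂_i > 0 such that π_i is strictly increasing on (0, x̂_i) and strictly decreasing on [x̂_i, ∞), then x̂₂ < x̂₁. -/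
open Real Set Filter Topology

/-- if `h, μ` are C¹ on `(0,∞)` with `h' > 0`, `0 < c₁ < c₂`, and each
`π_i(x) = h(x) + c_i μ(x)` is strictly increasing on `(0, x̂_i)` and strictly decreasing on
`[x̂_i, ∞)`, then `x̂₂ < x̂₁`. -/
theorem stmt13 (h μ : ℝ → ℝ)
    (hh1 : ContDiffOn ℝ 1 h (Ioi 0)) (hμ1 : ContDiffOn ℝ 1 μ (Ioi 0))
    (hh' : ∀ x > (0:ℝ), 0 < deriv h x)
    (c₁ c₂ : ℝ) (hc₁ : 0 < c₁) (hc₁₂ : c₁ < c₂)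
    (x₁ x₂ : ℝ) (hx₁ : 0 < x₁) (hx₂ : 0 < x₂)
    (h1mono : StrictMonoOn (fun x => h x + c₁ * μ x) (Ioo 0 x₁))
    (h1anti : StrictAntiOn (fun x => h x + c₁ * μ x) (Ici x₁))
    (h2mono : StrictMonoOn (fun x => h x + c₂ * μ x) (Ioo 0 x₂))
    (h2anti : StrictAntiOn (fun x => h x + c₂ * μ x) (Ici x₂)) :
    x₂ < x₁ := by
  by_contra hcon
  push_neg at hcon  -- x₁ ≤ x₂
  have hopen : IsOpen (Ioi (0:ℝ)) := isOpen_Ioi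
  have hx₂mem : x₂ ∈ Ioi (0:ℝ) := hx₂
  have hdh : DifferentiableAt ℝ h x₂ :=
    (hh1.differentiableOn one_ne_zero).differentiableAt (hopen.mem_nhds hx₂mem)
  have hdμ : DifferentiableAt ℝ μ x₂ :=
    (hμ1.differentiableOn one_ne_zero).differentiableAt (hopen.mem_nhds hx₂mem)
  set H := deriv h x₂ with hH
  set M := deriv μ x₂ with hM
  have hd2 : HasDerivAt (fun x => h x + c₂ * μ x) (H + c₂ * M) x₂ :=
    (hdh.hasDerivAt).add ((hdμ.hasDerivAt).const_mul c₂)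
  have hd1 : HasDerivAt (fun x => h x + c₁ * μ x) (H + c₁ * M) x₂ :=
    (hdh.hasDerivAt).add ((hdμ.hasDerivAt).const_mul c₁)
  -- local max of f₂ at x₂
  have hcont : ContinuousWithinAt (fun x => h x + c₂ * μ x) (Ioi 0) x₂ :=
    ((hh1.continuousOn x₂ hx₂mem).add ((hμ1.continuousOn x₂ hx₂mem).const_smul c₂))
  have hmax : ∀ y ∈ Ioi (0:ℝ), (fun x => h x + c₂ * μ x) y ≤ (fun x => h x + c₂ * μ x) x₂ := by
    intro y hy
    rcases lt_trichotomy y x₂ with hlt | rfl | hgt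
    · -- use continuity and strict mono on (0, x₂)
      have hne : (Ioo y x₂).Nonempty := nonempty_Ioo.2 hlt
      have hsub : Ioo y x₂ ⊆ Ioi (0:ℝ) := fun z hz => lt_trans hy hz.1
      have htend : Tendsto (fun x => h x + c₂ * μ x) (𝓝[Ioo y x₂] x₂)
          (𝓝 ((fun x => h x + c₂ * μ x) x₂)) :=
        hcont.mono hsub |>.tendsto
      have hNB : (𝓝[Ioo y x₂] x₂).NeBot := by
        apply mem_closure_iff_nhdsWithin_neBot.mp
        rw [closure_Ioo (ne_of_lt hlt)]
        exact ⟨le_of_lt hlt, le_rfl⟩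
      refine ge_of_tendsto htend ?_
      filter_upwards [self_mem_nhdsWithin] with z hz
      exact le_of_lt (h2mono ⟨hy, hlt⟩ ⟨lt_trans hy hz.1, hz.2⟩ hz.1)
    · exact le_rfl
    · exact le_of_lt (h2anti (le_refl x₂ : x₂ ∈ Ici x₂) (le_of_lt hgt) hgt)
  have hloc : IsLocalMax (fun x => h x + c₂ * μ x) x₂ := by
    filter_upwards [hopen.mem_nhds hx₂mem] with y hy using hmax y hy
  have hzero : H + c₂ * M = 0 := by
    have := hloc.deriv_eq_zero
    rwa [hd2.deriv] at this
  -- f₁ has nonpositive derivative at x₂ (it is strictly antitone on Ici x₂ ⊆ Ici x₁)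
  have hslope : H + c₁ * M ≤ 0 := by
    have htend : Tendsto (slope (fun x => h x + c₁ * μ x) x₂) (𝓝[>] x₂) (𝓝 (H + c₁ * M)) :=
      (hasDerivAt_iff_tendsto_slope.mp hd1).mono_left
        (nhdsWithin_mono _ (fun z hz => ne_of_gt hz))
    refine le_of_tendsto htend ?_
    filter_upwards [self_mem_nhdsWithin] with z hz
    have hz' : x₂ < z := hz
    have h1 : (fun x => h x + c₁ * μ x) z < (fun x => h x + c₁ * μ x) x₂ :=
      h1anti hcon (le_trans hcon (le_of_lt hz')) hz'
    have : slope (fun x => h x + c₁ * μ x) x₂ z =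
        ((fun x => h x + c₁ * μ x) z - (fun x => h x + c₁ * μ x) x₂) / (z - x₂) := by
      rw [slope_def_field]
    rw [this]
    apply div_nonpos_of_nonpos_of_nonneg
    · linarith
    · linarith
  have hH0 : 0 < H := hh' x₂ hx₂
  nlinarith [hH0, hzero, hslope, sub_pos.mpr hc₁₂]
end

section
/- Assume for i = 1,2 there exists x̂_i > 0 such that π_i is strictly increasing on (0, x̂_i) and strictly decreasing on [x̂_i, ∞). Let 0 < a_* < b_* satisfy a_* ≤ x̂₂ < x̂₁ ≤ b_* and the system ∫_{a_*}^{b_*} (π₂(x) − π₂(a_*)) m(x) dx + (c₁ − c₂)/(2 s(b_*)) = 0 and ∫_{a_*}^{b_*} (π₁(x) − π₁(b_*)) m(x) dx + (c₁ − c₂)/(2 s(a_*)) = 0, set λ_* := (1/M[a_*,b_*])·[∫_{a_*}^{b_*} h(x) m(x) dx + c₁/(2 s(b_*)) − c₂/(2 s(a_*))], and define u(x) := c₁ x + ∫_{a_*}^x 2 s(t) (∫_t^{b_*} (π₁(y) − λ_*) m(y) dy) dt for x ∈ [a_*, b_*]. Then c₁ ≤ u'(x) ≤ c₂ for all x ∈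 [a_*, b_*]. -/
open Real MeasureTheory Set Filter Topology intervalIntegral

namespace Stmt17Aux

/-- interval integrability for functions continuous on `Ioi 0`. -/
lemma intInt {f : ℝ → ℝ} (hf : ContinuousOn f (Ioi 0)) {p q : ℝ}
    (hp : 0 < p) (hq : 0 < q) : IntervalIntegrable f volume p q :=
  (hf.mono (fun x hx => lt_of_lt_of_le (lt_min hp hq) hx.1)).intervalIntegrable

lemma monoIoc {f : ℝ → ℝ} {b : ℝ} (hb : 0 < b)
    (hf : StrictMonoOn f (Ioo 0 b)) (hfc : ContinuousOn f (Ioi 0)) :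
    MonotoneOn f (Ioc 0 b) := by
  intro x hx y hy hxy
  rcases eq_or_lt_of_le hxy with rfl | hlt
  · exact le_rfl
  rcases eq_or_lt_of_le hy.2 with rfl | hyb
  · -- y = b : use continuity
    have hx' : x ∈ Ioo 0 y := ⟨hx.1, hlt⟩
    have hne : (Ioo x y).Nonempty := nonempty_Ioo.2 hlt
    have hb' : 0 < y := hy.1
    have htend : Tendsto f (𝓝[Ioo x y] y) (𝓝 (f y)) :=
      (hfc y hb').tendsto.mono_left
        (nhdsWithin_mono _ (fun z (hz : z ∈ Ioo x y) => lt_trans hx.1 hz.1))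
    have hev : ∀ᶠ z in 𝓝[Ioo x y] y, f x ≤ f z := by
      filter_upwards [self_mem_nhdsWithin] with z hz
      exact (hf hx' ⟨lt_trans hx.1 hz.1, hz.2⟩ hz.1).le
    have hne' : (𝓝[Ioo x y] y).NeBot := right_nhdsWithin_Ioo_neBot hlt
    exact ge_of_tendsto htend hev
  · exact (hf ⟨hx.1, lt_trans hlt hyb⟩ ⟨hy.1, hyb⟩ hlt).le


section
variable {μ σ : ℝ → ℝ}
variable (hμc : ContinuousOn μ (Ioi 0)) (hσc : ContinuousOn σ (Ioi 0))
  (hσpos : ∀ x > (0:ℝ), 0 < σ x)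

lemma sden_pos (x : ℝ) : 0 < sden μ σ x := Real.exp_pos _

include hμc hσc hσpos

lemma g_contOn : ContinuousOn (fun y => 2 * μ y / (σ y) ^ 2) (Ioi 0) := by
  exact (continuousOn_const.mul hμc).div (hσc.pow 2)
    (fun x hx => pow_ne_zero _ (ne_of_gt (hσpos x hx)))

lemma sden_hasDeriv {x : ℝ} (hx : 0 < x) :
    HasDerivAt (sden μ σ) (-(2 * μ x / (σ x) ^ 2) * sden μ σ x) x := by
  have hg := g_contOn hμc hσc hσpos
  have hint : HasDerivAt (fun t => ∫ y in (1:ℝ)..t, 2 * μ y / (σ y) ^ 2)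
      (2 * μ x / (σ x) ^ 2) x :=
    intervalIntegral.integral_hasDerivAt_right (intInt hg one_pos hx)
      (hg.stronglyMeasurableAtFilter isOpen_Ioi x hx)
      (hg.continuousAt (isOpen_Ioi.mem_nhds hx))
  have : HasDerivAt (fun t => Real.exp (-(∫ y in (1:ℝ)..t, 2 * μ y / (σ y) ^ 2)))
      (Real.exp (-(∫ y in (1:ℝ)..x, 2 * μ y / (σ y) ^ 2)) * -(2 * μ x / (σ x) ^ 2)) x :=
    (Real.hasDerivAt_exp _).comp x hint.neg
  rw [show (fun t => Real.exp (-(∫ y in (1:ℝ)..t, 2 * μ y / (σ y) ^ 2))) = sden μ σ from rfl]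
    at this
  convert this using 1
  exact mul_comm _ _

lemma sden_contOn : ContinuousOn (sden μ σ) (Ioi 0) := fun x hx =>
  ((sden_hasDeriv hμc hσc hσpos hx).continuousAt).continuousWithinAt

lemma mden_contOn : ContinuousOn (mden μ σ) (Ioi 0) := by
  apply ContinuousOn.div continuousOn_const
    ((hσc.pow 2).mul (sden_contOn hμc hσc hσpos))
  intro x hx
  exact mul_ne_zero (pow_ne_zero _ (ne_of_gt (hσpos x hx))) (ne_of_gt (sden_pos x))

lemma mden_pos {x : ℝ} (hx : 0 < x) : 0 < mden μ σ x := by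
  unfold mden
  have h1 := hσpos x hx
  have h2 := sden_pos (μ := μ) (σ := σ) x
  positivity
  
lemma inv2s_hasDeriv {x : ℝ} (hx : 0 < x) :
    HasDerivAt (fun y => 1 / (2 * sden μ σ y)) (μ x * mden μ σ x) x := by
  have hs := sden_hasDeriv hμc hσc hσpos (x := x) hx
  have h2s : HasDerivAt (fun y => 2 * sden μ σ y)
      (2 * (-(2 * μ x / (σ x) ^ 2) * sden μ σ x)) x := hs.const_mul 2
  have hsx0 := sden_pos (μ := μ) (σ := σ) x
  have hne : 2 * sden μ σ x ≠ 0 := by positivity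
  have := h2s.inv hne
  have heq : -(2 * (-(2 * μ x / (σ x) ^ 2) * sden μ σ x)) / (2 * sden μ σ x) ^ 2
      = μ x * mden μ σ x := by
    have hσx := hσpos x hx
    have hsx := sden_pos (μ := μ) (σ := σ) x
    unfold mden
    field_simp
  rw [heq] at this
  have hfe : (fun y => 1 / (2 * sden μ σ y)) = (fun y => 2 * sden μ σ y)⁻¹ := by
    ext y
    simp [one_div]
  rw [hfe]
  exact this

lemma integral_mu_mden {p q : ℝ} (hp : 0 < p) (hq : 0 < q) :
    ∫ y in p..q, μ y * mden μ σ y = 1 / (2 * sden μ σ q) - 1 / (2 * sden μ σ p) := by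
  apply intervalIntegral.integral_eq_sub_of_hasDerivAt
  · intro y hy
    have hy0 : 0 < y := lt_of_lt_of_le (lt_min hp hq) hy.1
    exact inv2s_hasDeriv hμc hσc hσpos hy0
  · exact intInt (hμc.mul (mden_contOn hμc hσc hσpos)) hp hq

end

end Stmt17Aux

set_option maxHeartbeats 1000000 in
/-- gradient bounds.  Under the unimodality assumption on
`π₁(x) = h(x)+c₁μ(x)` and `π₂(x) = h(x)+c₂μ(x)`, if `a_* ≤ x̂₂ < x̂₁ ≤ b_*` solve the
first-order system and `λ_*`, `u` are defined as in the direct solution approach, then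
`c₁ ≤ u'(x) ≤ c₂` for all `x ∈ [a_*, b_*]`. -/

theorem stmt17 (μ σ h : ℝ → ℝ)
    (hμc : ContinuousOn μ (Ioi 0)) (hσc : ContinuousOn σ (Ioi 0))
    (hhc : ContinuousOn h (Ioi 0))
    (hσpos : ∀ x > (0:ℝ), 0 < σ x) (hhnn : ∀ x > (0:ℝ), 0 ≤ h x)
    (c₁ c₂ : ℝ) (hc₁ : 0 < c₁) (hc₁₂ : c₁ < c₂)
    (x₁ x₂ : ℝ) (hx₁ : 0 < x₁) (hx₂ : 0 < x₂)
    (h1mono : StrictMonoOn (fun x => h x + c₁ * μ x) (Ioo 0 x₁))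
    (h1anti : StrictAntiOn (fun x => h x + c₁ * μ x) (Ici x₁))
    (h2mono : StrictMonoOn (fun x => h x + c₂ * μ x) (Ioo 0 x₂))
    (h2anti : StrictAntiOn (fun x => h x + c₂ * μ x) (Ici x₂))
    (astar bstar lamstar : ℝ) (hastar : 0 < astar) (hab : astar < bstar)
    (horder : astar ≤ x₂ ∧ x₂ < x₁ ∧ x₁ ≤ bstar)
    (heq1 : (∫ x in astar..bstar,
        ((h x + c₂ * μ x) - (h astar + c₂ * μ astar)) * mden μ σ x)
      + (c₁ - c₂) / (2 * sden μ σ bstar) = 0)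
    (heq2 : (∫ x in astar..bstar,
        ((h x + c₁ * μ x) - (h bstar + c₁ * μ bstar)) * mden μ σ x)
      + (c₁ - c₂) / (2 * sden μ σ astar) = 0)
    (hlam : lamstar = 1 / Mspeed μ σ astar bstar *
      ((∫ x in astar..bstar, h x * mden μ σ x)
        + c₁ / (2 * sden μ σ bstar) - c₂ / (2 * sden μ σ astar)))
    (u : ℝ → ℝ)
    (hu : u = fun x => c₁ * x +
      ∫ t in astar..x, 2 * sden μ σ t *
        ∫ y in t..bstar, ((h y + c₁ * μ y) - lamstar) * mden μ σ y) :
    ∀ x ∈ Icc astar bstar, c₁ ≤ deriv u x ∧ deriv u x ≤ c₂ := by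
  obtain ⟨hax2, hx21, hx1b⟩ := horder
  have hbstar : 0 < bstar := hastar.trans hab
  have hmc := Stmt17Aux.mden_contOn hμc hσc hσpos
  have hsc := Stmt17Aux.sden_contOn hμc hσc hσpos
  have hmpos : ∀ t : ℝ, 0 < t → 0 < mden μ σ t :=
    fun t ht => Stmt17Aux.mden_pos hμc hσc hσpos ht
  have hsa0 : 0 < sden μ σ astar := Stmt17Aux.sden_pos astar
  have hsb0 : 0 < sden μ σ bstar := Stmt17Aux.sden_pos bstar
  -- continuity of the payoff functions
  have hπ1c : ContinuousOn (fun x => h x + c₁ * μ x) (Ioi 0) :=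
    hhc.add (continuousOn_const.mul hμc)
  have hπ2c : ContinuousOn (fun x => h x + c₂ * μ x) (Ioi 0) :=
    hhc.add (continuousOn_const.mul hμc)
  have hq1 : ContinuousOn (fun y => (h y + c₁ * μ y) - lamstar) (Ioi 0) :=
    hπ1c.sub continuousOn_const
  have hq2 : ContinuousOn (fun y => (h y + c₂ * μ y) - lamstar) (Ioi 0) :=
    hπ2c.sub continuousOn_const
  -- monotone versions of the unimodality hypotheses
  have hmono1 : MonotoneOn (fun x => h x + c₁ * μ x) (Ioc 0 x₁) :=
    Stmt17Aux.monoIoc hx₁ h1mono hπ1c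
  have hmono2 : MonotoneOn (fun x => h x + c₂ * μ x) (Ioc 0 x₂) :=
    Stmt17Aux.monoIoc hx₂ h2mono hπ2c
  have hanti1 : AntitoneOn (fun x => h x + c₁ * μ x) (Ici x₁) := h1anti.antitoneOn
  have hanti2 : AntitoneOn (fun x => h x + c₂ * μ x) (Ici x₂) := h2anti.antitoneOn
  -- basic integrability
  have intm : IntervalIntegrable (mden μ σ) volume astar bstar :=
    Stmt17Aux.intInt hmc hastar hbstar
  have inth : IntervalIntegrable (fun y => h y * mden μ σ y) volume astar bstar :=
    Stmt17Aux.intInt (hhc.mul hmc) hastar hbstar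
  have intmu : IntervalIntegrable (fun y => μ y * mden μ σ y) volume astar bstar :=
    Stmt17Aux.intInt (hμc.mul hmc) hastar hbstar
  -- splitting lemma for the basic integrals
  have hsplit : ∀ (c K : ℝ), (∫ y in astar..bstar, ((h y + c * μ y) - K) * mden μ σ y)
      = (∫ y in astar..bstar, h y * mden μ σ y)
        + c * (1 / (2 * sden μ σ bstar) - 1 / (2 * sden μ σ astar))
        - K * Mspeed μ σ astar bstar := by
    intro c K
    have e : EqOn (fun y => ((h y + c * μ y) - K) * mden μ σ y)
        (fun y => h y * mden μ σ y + c * (μ y * mden μ σ y) - K * mden μ σ y)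
        (uIcc astar bstar) := fun y _ => by ring
    rw [intervalIntegral.integral_congr e,
      intervalIntegral.integral_sub (inth.add (intmu.const_mul c)) (intm.const_mul K),
      intervalIntegral.integral_add inth (intmu.const_mul c),
      intervalIntegral.integral_const_mul, intervalIntegral.integral_const_mul,
      Stmt17Aux.integral_mu_mden hμc hσc hσpos hastar hbstar]
    rfl
  have hM : 0 < Mspeed μ σ astar bstar := by
    have : 0 < ∫ x in astar..bstar, mden μ σ x :=
      intervalIntegral.intervalIntegral_pos_of_pos_on intm
        (fun x hx => hmpos x (hastar.trans hx.1)) hab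
    exact this
  have hlamM : lamstar * Mspeed μ σ astar bstar
      = (∫ x in astar..bstar, h x * mden μ σ x)
        + c₁ / (2 * sden μ σ bstar) - c₂ / (2 * sden μ σ astar) := by
    rw [hlam, one_div, inv_mul_eq_div, div_mul_cancel₀ _ hM.ne']
  rw [hsplit c₂ (h astar + c₂ * μ astar)] at heq1
  rw [hsplit c₁ (h bstar + c₁ * μ bstar)] at heq2
  have hpi2a : h astar + c₂ * μ astar = lamstar := by
    have hkey : (h astar + c₂ * μ astar) * Mspeed μ σ astar bstar
        = lamstar * Mspeed μ σ astar bstar := by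
      linear_combination -heq1 - hlamM
    exact mul_right_cancel₀ (ne_of_gt hM) hkey
  have hpi1b : h bstar + c₁ * μ bstar = lamstar := by
    have hkey : (h bstar + c₁ * μ bstar) * Mspeed μ σ astar bstar
        = lamstar * Mspeed μ σ astar bstar := by
      linear_combination -heq2 - hlamM
    exact mul_right_cancel₀ (ne_of_gt hM) hkey
  -- the two auxiliary functions
  set G : ℝ → ℝ :=
    fun t => ∫ y in t..bstar, ((h y + c₁ * μ y) - lamstar) * mden μ σ y with hG
  set F : ℝ → ℝ :=
    fun t => ∫ y in t..bstar, ((h y + c₂ * μ y) - lamstar) * mden μ σ y with hF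
  have hGt : ∀ t, G t = ∫ y in t..bstar, ((h y + c₁ * μ y) - lamstar) * mden μ σ y :=
    fun t => by rw [hG]
  have hFt : ∀ t, F t = ∫ y in t..bstar, ((h y + c₂ * μ y) - lamstar) * mden μ σ y :=
    fun t => by rw [hF]
  -- generic FTC for the left endpoint
  have hFTCleft : ∀ (q : ℝ → ℝ), ContinuousOn q (Ioi 0) → ∀ t : ℝ, 0 < t →
      HasDerivAt (fun r => ∫ y in r..bstar, q y * mden μ σ y) (-(q t * mden μ σ t)) t := by
    intro q hq t ht
    have hqm : ContinuousOn (fun y => q y * mden μ σ y) (Ioi 0) := hq.mul hmc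
    exact intervalIntegral.integral_hasDerivAt_left (Stmt17Aux.intInt hqm ht hbstar)
      (hqm.stronglyMeasurableAtFilter isOpen_Ioi t ht)
      (hqm.continuousAt (isOpen_Ioi.mem_nhds ht))
  have hGderiv : ∀ t : ℝ, 0 < t →
      HasDerivAt G (-(((h t + c₁ * μ t) - lamstar) * mden μ σ t)) t := by
    intro t ht
    have := hFTCleft (fun y => (h y + c₁ * μ y) - lamstar) hq1 t ht
    rw [hG]; exact this
  have hFderiv : ∀ t : ℝ, 0 < t →
      HasDerivAt F (-(((h t + c₂ * μ t) - lamstar) * mden μ σ t)) t := by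
    intro t ht
    have := hFTCleft (fun y => (h y + c₂ * μ y) - lamstar) hq2 t ht
    rw [hF]; exact this
  -- values at the endpoints
  have hGa : G astar = (c₂ - c₁) * (1 / (2 * sden μ σ astar)) := by
    rw [hGt astar, hsplit c₁ lamstar]; linear_combination -hlamM
  have hFa : F astar = (c₂ - c₁) * (1 / (2 * sden μ σ bstar)) := by
    rw [hFt astar, hsplit c₂ lamstar]; linear_combination -hlamM
  have hGb : G bstar = 0 := by rw [hGt bstar]; exact intervalIntegral.integral_same
  have hFb : F bstar = 0 := by rw [hFt bstar]; exact intervalIntegral.integral_same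
  -- relation between F and G
  have hFG : ∀ t : ℝ, 0 < t → F t - G t
      = (c₂ - c₁) * (1 / (2 * sden μ σ bstar) - 1 / (2 * sden μ σ t)) := by
    intro t ht
    have e : EqOn
        (fun y => ((h y + c₂ * μ y) - lamstar) * mden μ σ y
          - ((h y + c₁ * μ y) - lamstar) * mden μ σ y)
        (fun y => (c₂ - c₁) * (μ y * mden μ σ y)) (uIcc t bstar) := fun y _ => by ring
    rw [hFt t, hGt t,
      ← intervalIntegral.integral_sub (f := fun y => ((h y + c₂ * μ y) - lamstar) * mden μ σ y)
        (g := fun y => ((h y + c₁ * μ y) - lamstar) * mden μ σ y) (Stmt17Aux.intInt (hq2.mul hmc) ht hbstar)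
        (Stmt17Aux.intInt (hq1.mul hmc) ht hbstar),
      intervalIntegral.integral_congr e, intervalIntegral.integral_const_mul,
      Stmt17Aux.integral_mu_mden hμc hσc hσpos ht hbstar]
  -- G is nonnegative on [x₁, bstar]
  have hGnnR : ∀ t ∈ Icc x₁ bstar, 0 ≤ G t := by
    have hGanti : AntitoneOn G (Icc x₁ bstar) := by
      apply antitoneOn_of_deriv_nonpos (convex_Icc _ _)
      · exact fun t ht =>
          (hGderiv t (lt_of_lt_of_le hx₁ ht.1)).continuousAt.continuousWithinAt
      · rw [interior_Icc]
        exact fun t ht =>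
          (hGderiv t (hx₁.trans ht.1)).differentiableAt.differentiableWithinAt
      · rw [interior_Icc]
        intro t ht
        rw [(hGderiv t (hx₁.trans ht.1)).deriv]
        have hπ : lamstar ≤ h t + c₁ * μ t := by
          rw [← hpi1b]
          exact hanti1 (mem_Ici.2 ht.1.le) (mem_Ici.2 hx1b) ht.2.le
        have hm := hmpos t (hx₁.trans ht.1)
        have : 0 ≤ ((h t + c₁ * μ t) - lamstar) * mden μ σ t :=
          mul_nonneg (by linarith) hm.le
        linarith
    intro t ht
    have := hGanti ht (right_mem_Icc.2 hx1b) ht.2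
    rw [hGb] at this
    linarith
  -- G is nonnegative on [astar, x₁]
  have hGnnL : ∀ t ∈ Icc astar x₁, 0 ≤ G t := by
    intro t ht
    have ht0 : 0 < t := hastar.trans_le ht.1
    by_cases hc : h t + c₁ * μ t ≤ lamstar
    · -- G is monotone on [astar, t]
      have hmonoG : MonotoneOn G (Icc astar t) := by
        apply monotoneOn_of_deriv_nonneg (convex_Icc _ _)
        · exact fun z hz =>
            (hGderiv z (lt_of_lt_of_le hastar hz.1)).continuousAt.continuousWithinAt
        · rw [interior_Icc]
          exact fun z hz =>
            (hGderiv z (hastar.trans hz.1)).differentiableAt.differentiableWithinAt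
        · rw [interior_Icc]
          intro z hz
          rw [(hGderiv z (hastar.trans hz.1)).deriv]
          have hz0 : 0 < z := hastar.trans hz.1
          have hπ : h z + c₁ * μ z ≤ lamstar := by
            have := hmono1 ⟨hz0, hz.2.le.trans ht.2⟩ ⟨ht0, ht.2⟩ hz.2.le
            simp only [] at this
            linarith
          have hm := hmpos z hz0
          have : ((h z + c₁ * μ z) - lamstar) * mden μ σ z ≤ 0 :=
            mul_nonpos_of_nonpos_of_nonneg (by linarith) hm.le
          linarith
      have hmono := hmonoG (left_mem_Icc.2 ht.1) ⟨ht.1, le_rfl⟩ ht.1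
      have hA0 : 0 < 1 / (2 * sden μ σ astar) := by positivity
      rw [hGa] at hmono
      nlinarith
    · push_neg at hc
      have hantiG : AntitoneOn G (Icc t x₁) := by
        apply antitoneOn_of_deriv_nonpos (convex_Icc _ _)
        · exact fun z hz =>
            (hGderiv z (lt_of_lt_of_le ht0 hz.1)).continuousAt.continuousWithinAt
        · rw [interior_Icc]
          exact fun z hz =>
            (hGderiv z (ht0.trans hz.1)).differentiableAt.differentiableWithinAt
        · rw [interior_Icc]
          intro z hz
          rw [(hGderiv z (ht0.trans hz.1)).deriv]
          have hz0 : 0 < z := ht0.trans hz.1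
          have hπ : lamstar ≤ h z + c₁ * μ z := by
            have := hmono1 ⟨ht0, ht.2⟩ ⟨hz0, hz.2.le⟩ hz.1.le
            simp only [] at this
            linarith
          have hm := hmpos z hz0
          have : 0 ≤ ((h z + c₁ * μ z) - lamstar) * mden μ σ z :=
            mul_nonneg (by linarith) hm.le
          linarith
      have hanti := hantiG (left_mem_Icc.2 ht.2) ⟨ht.2, le_rfl⟩ ht.2
      have := hGnnR x₁ ⟨le_rfl, hx1b⟩
      linarith
  have hGnn : ∀ t ∈ Icc astar bstar, 0 ≤ G t := by
    intro t ht
    by_cases hc : t ≤ x₁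
    · exact hGnnL t ⟨ht.1, hc⟩
    · exact hGnnR t ⟨le_of_not_ge hc, ht.2⟩
  -- F is bounded above by F astar on [astar, x₂]
  have hFleL : ∀ t ∈ Icc astar x₂, F t ≤ F astar := by
    have hantiF : AntitoneOn F (Icc astar x₂) := by
      apply antitoneOn_of_deriv_nonpos (convex_Icc _ _)
      · exact fun z hz =>
          (hFderiv z (lt_of_lt_of_le hastar hz.1)).continuousAt.continuousWithinAt
      · rw [interior_Icc]
        exact fun z hz =>
          (hFderiv z (hastar.trans hz.1)).differentiableAt.differentiableWithinAt
      · rw [interior_Icc]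
        intro z hz
        rw [(hFderiv z (hastar.trans hz.1)).deriv]
        have hz0 : 0 < z := hastar.trans hz.1
        have hπ : lamstar ≤ h z + c₂ * μ z := by
          rw [← hpi2a]
          exact hmono2 ⟨hastar, hax2⟩ ⟨hz0, hz.2.le⟩ hz.1.le
        have hm := hmpos z hz0
        have : 0 ≤ ((h z + c₂ * μ z) - lamstar) * mden μ σ z :=
          mul_nonneg (by linarith) hm.le
        linarith
    intro t ht
    exact hantiF (left_mem_Icc.2 (ht.1.trans ht.2)) ht ht.1
  -- F is bounded above by F astar on [x₂, bstar]
  have hFleR : ∀ t ∈ Icc x₂ bstar, F t ≤ F astar := by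
    intro t ht
    have ht0 : 0 < t := hx₂.trans_le ht.1
    by_cases hc : lamstar ≤ h t + c₂ * μ t
    · have hantiF : AntitoneOn F (Icc x₂ t) := by
        apply antitoneOn_of_deriv_nonpos (convex_Icc _ _)
        · exact fun z hz =>
            (hFderiv z (lt_of_lt_of_le hx₂ hz.1)).continuousAt.continuousWithinAt
        · rw [interior_Icc]
          exact fun z hz =>
            (hFderiv z (hx₂.trans hz.1)).differentiableAt.differentiableWithinAt
        · rw [interior_Icc]
          intro z hz
          rw [(hFderiv z (hx₂.trans hz.1)).deriv]
          have hπ : lamstar ≤ h z + c₂ * μ z := by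
            have := hanti2 (mem_Ici.2 hz.1.le) (mem_Ici.2 (hz.1.le.trans hz.2.le)) hz.2.le
            simp only [] at this
            linarith
          have hm := hmpos z (hx₂.trans hz.1)
          have : 0 ≤ ((h z + c₂ * μ z) - lamstar) * mden μ σ z :=
            mul_nonneg (by linarith) hm.le
          linarith
      have h1 := hantiF (left_mem_Icc.2 ht.1) ⟨ht.1, le_rfl⟩ ht.1
      have h2 := hFleL x₂ ⟨hax2, le_rfl⟩
      linarith
    · push_neg at hc
      have hmonoF : MonotoneOn F (Icc t bstar) := by
        apply monotoneOn_of_deriv_nonneg (convex_Icc _ _)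
        · exact fun z hz =>
            (hFderiv z (lt_of_lt_of_le ht0 hz.1)).continuousAt.continuousWithinAt
        · rw [interior_Icc]
          exact fun z hz =>
            (hFderiv z (ht0.trans hz.1)).differentiableAt.differentiableWithinAt
        · rw [interior_Icc]
          intro z hz
          rw [(hFderiv z (ht0.trans hz.1)).deriv]
          have hπ : h z + c₂ * μ z ≤ lamstar := by
            have := hanti2 (mem_Ici.2 ht.1) (mem_Ici.2 (ht.1.trans hz.1.le)) hz.1.le
            simp only [] at this
            linarith
          have hm := hmpos z (ht0.trans hz.1)
          have : ((h z + c₂ * μ z) - lamstar) * mden μ σ z ≤ 0 :=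
            mul_nonpos_of_nonpos_of_nonneg (by linarith) hm.le
          linarith
      have h1 := hmonoF (left_mem_Icc.2 ht.2) (right_mem_Icc.2 ht.2) ht.2
      rw [hFb] at h1
      have hB0 : 0 < 1 / (2 * sden μ σ bstar) := by positivity
      rw [hFa]
      nlinarith
  have hFle : ∀ t ∈ Icc astar bstar, F t ≤ (c₂ - c₁) * (1 / (2 * sden μ σ bstar)) := by
    intro t ht
    rw [← hFa]
    by_cases hc : t ≤ x₂
    · exact hFleL t ⟨ht.1, hc⟩
    · exact hFleR t ⟨le_of_not_ge hc, ht.2⟩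
  -- continuity of the integrand of u
  have hGcont : ContinuousOn G (Ioi 0) :=
    fun t ht => (hGderiv t ht).continuousAt.continuousWithinAt
  have hΦc : ContinuousOn (fun t => 2 * sden μ σ t * G t) (Ioi 0) :=
    (continuousOn_const.mul hsc).mul hGcont
  have hΦeq : (fun t => 2 * sden μ σ t *
      ∫ y in t..bstar, ((h y + c₁ * μ y) - lamstar) * mden μ σ y)
      = fun t => 2 * sden μ σ t * G t := by
    funext t; rw [hGt t]
  -- the final computation
  intro x hx
  have hx0 : 0 < x := hastar.trans_le hx.1
  have hud : HasDerivAt u (c₁ + 2 * sden μ σ x * G x) x := by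
    rw [hu, hΦeq]
    apply HasDerivAt.add
    · simpa using (hasDerivAt_id x).const_mul c₁
    · exact intervalIntegral.integral_hasDerivAt_right
        (Stmt17Aux.intInt hΦc hastar hx0)
        (hΦc.stronglyMeasurableAtFilter isOpen_Ioi x hx0)
        (hΦc.continuousAt (isOpen_Ioi.mem_nhds hx0))
  rw [hud.deriv]
  have hsx0 : 0 < sden μ σ x := Stmt17Aux.sden_pos x
  constructor
  · have : 0 ≤ 2 * sden μ σ x * G x :=
      mul_nonneg (by positivity) (hGnn x hx)
    linarith
  · -- upper bound
    have h1 : F x ≤ (c₂ - c₁) * (1 / (2 * sden μ σ bstar)) := hFle x hx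
    have h2 := hFG x hx0
    have e : G x = F x - (c₂ - c₁) * (1 / (2 * sden μ σ bstar))
        + (c₂ - c₁) * (1 / (2 * sden μ σ x)) := by linear_combination -h2
    have hcancel : 2 * sden μ σ x * (1 / (2 * sden μ σ x)) = 1 := by
      field_simp
    have hkey : 2 * sden μ σ x * G x ≤ c₂ - c₁ := by
      calc 2 * sden μ σ x * G x
          = 2 * sden μ σ x * (F x - (c₂ - c₁) * (1 / (2 * sden μ σ bstar)))
            + (c₂ - c₁) * (2 * sden μ σ x * (1 / (2 * sden μ σ x))) := by
            rw [e]; ring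
        _ = 2 * sden μ σ x * (F x - (c₂ - c₁) * (1 / (2 * sden μ σ bstar)))
            + (c₂ - c₁) := by rw [hcancel, mul_one]
        _ ≤ 0 + (c₂ - c₁) := by
            have : 2 * sden μ σ x * (F x - (c₂ - c₁) * (1 / (2 * sden μ σ bstar))) ≤ 0 :=
              mul_nonpos_of_nonneg_of_nonpos (by positivity) (by linarith)
            linarith
        _ = c₂ - c₁ := by ring
    linarith
end

section
/- Let μ, γ, σ > 0 and 0 < c₁ < c₂ be constants, and let h : [0,∞) → [0,∞) be continuously differentiable, strictly concave, nondecreasing with h(0) = 0, h'(x) > 0 for all x > 0, and sup_{x ≥ 0}(h(x) − z x) < ∞ for every z > 0. Set π₁(x) := h(x) + c₁ μ x (1 − γ x), and suppose b₀ > 0 satisfies π₁(x) > 0 for x ∈ (0, b₀) and π₁(b₀) = 0. Then lim_{a↓0} 1/s(a) = 0, the integral ∫₀^{b₀} π₁(y) m(y) dy is finite and strictly positive, and consequently liminf_{a↓0} [∫₀^{b₀} (π₁(y) − π₁(b₀)) m(y) dy + (c₁ − c₂)/(2 s(a))] > 0. -/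
open Real MeasureTheory Set Filter Topology intervalIntegral

/-- for the Verhulst–Pearl diffusion with scale density
`s(x) = x^{−α} e^{γα(x−1)}` and speed density `m(x) = σ⁻² x^{α−2} e^{−γα(x−1)}`
(`α = 2μ/σ²`), with `π₁(x) = h(x) + c₁ μ x(1−γx)` positive on `(0,b₀)` and `π₁(b₀) = 0`:
`1/s(a) → 0` as `a ↓ 0`, the integral `∫₀^{b₀} π₁ m` is finite and strictly positive, and
`liminf_{a↓0} [∫₀^{b₀}(π₁(y) − π₁(b₀)) m(y) dy + (c₁−c₂)/(2s(a))] > 0`. -/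
theorem stmt19 (μ γ σ c₁ c₂ : ℝ) (hμ : 0 < μ) (hγ : 0 < γ) (hσ : 0 < σ)
    (hc₁ : 0 < c₁) (hc₁₂ : c₁ < c₂)
    (h : ℝ → ℝ) (hnn : ∀ x ≥ (0:ℝ), 0 ≤ h x)
    (hC1 : ContDiffOn ℝ 1 h (Ici 0))
    (hconc : StrictConcaveOn ℝ (Ici 0) h) (hmono : MonotoneOn h (Ici 0))
    (h0 : h 0 = 0) (hder : ∀ x > (0:ℝ), 0 < deriv h x)
    (hleg : ∀ z > (0:ℝ), BddAbove ((fun x => h x - z * x) '' Ici 0))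
    (α : ℝ) (hα : α = 2 * μ / σ ^ 2)
    (s m : ℝ → ℝ)
    (hs : ∀ x > (0:ℝ), s x = x ^ (-α) * Real.exp (γ * α * (x - 1)))
    (hm : ∀ x > (0:ℝ), m x = x ^ (α - 2) * Real.exp (-(γ * α * (x - 1))) / σ ^ 2)
    (b₀ : ℝ) (hb₀ : 0 < b₀)
    (hpos : ∀ x ∈ Ioo (0:ℝ) b₀, 0 < h x + c₁ * (μ * x * (1 - γ * x)))
    (hzero : h b₀ + c₁ * (μ * b₀ * (1 - γ * b₀)) = 0) :
    Tendsto (fun a => 1 / s a) (𝓝[>] (0:ℝ)) (𝓝 0) ∧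
    IntervalIntegrable (fun y => (h y + c₁ * (μ * y * (1 - γ * y))) * m y) volume 0 b₀ ∧
    (0 < ∫ y in (0:ℝ)..b₀, (h y + c₁ * (μ * y * (1 - γ * y))) * m y) ∧
    0 < Filter.liminf
      (fun a => (∫ y in (0:ℝ)..b₀,
          ((h y + c₁ * (μ * y * (1 - γ * y)))
            - (h b₀ + c₁ * (μ * b₀ * (1 - γ * b₀)))) * m y)
        + (c₁ - c₂) / (2 * s a)) (𝓝[>] (0:ℝ)) := by
  have hσ2 : (0:ℝ) < σ ^ 2 := by positivity
  have hα0 : 0 < α := by rw [hα]; positivity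
  -- positivity of m on (0, ∞)
  have hm_pos : ∀ y > (0:ℝ), 0 < m y := by
    intro y hy
    rw [hm y hy]
    have := Real.rpow_pos_of_pos hy (α - 2)
    positivity
  -- Part 1 : 1/s a → 0
  have part1 : Tendsto (fun a => 1 / s a) (𝓝[>] (0:ℝ)) (𝓝 0) := by
    have heq : ∀ᶠ a in 𝓝[>] (0:ℝ),
        a ^ α * Real.exp (-(γ * α * (a - 1))) = 1 / s a := by
      filter_upwards [self_mem_nhdsWithin] with a (ha : 0 < a)
      rw [hs a ha, Real.rpow_neg ha.le, one_div, mul_inv, inv_inv, ← Real.exp_neg]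
    have h1 : Tendsto (fun a : ℝ => a ^ α) (𝓝[>] (0:ℝ)) (𝓝 0) := by
      have := (Real.continuousAt_rpow_const 0 α (Or.inr hα0.le)).tendsto
      rw [Real.zero_rpow (ne_of_gt hα0)] at this
      exact this.mono_left nhdsWithin_le_nhds
    have h2 : Tendsto (fun a : ℝ => Real.exp (-(γ * α * (a - 1)))) (𝓝[>] (0:ℝ))
        (𝓝 (Real.exp (-(γ * α * ((0:ℝ) - 1))))) := by
      apply Tendsto.mono_left _ nhdsWithin_le_nhds
      exact (Real.continuous_exp.comp ((continuous_const.mul (continuous_id.sub continuous_const)).neg)).tendsto 0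
    have h3 := h1.mul h2
    rw [zero_mul] at h3
    exact Tendsto.congr' heq h3
  -- linear bound on h near 0
  obtain ⟨u, hu0, hub⟩ : ∃ u > (0:ℝ), ∀ y ∈ Ioo (0:ℝ) u,
      h y ≤ (derivWithin h (Ici 0) 0 + 1) * y := by
    set D := derivWithin h (Ici 0) 0 with hD
    have hdiff : HasDerivWithinAt h D (Ici 0) 0 :=
      ((hC1.differentiableOn one_ne_zero) 0 self_mem_Ici).hasDerivWithinAt
    have hslope : Tendsto (slope h 0) (𝓝[Ici 0 \ {0}] 0) (𝓝 D) :=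
      hasDerivWithinAt_iff_tendsto_slope.mp hdiff
    rw [Set.Ici_sdiff_left] at hslope
    have hev : ∀ᶠ y in 𝓝[>] (0:ℝ), slope h 0 y < D + 1 :=
      hslope.eventually_lt_const (by linarith)
    have hev2 : ∀ᶠ y in 𝓝[>] (0:ℝ), h y ≤ (D + 1) * y := by
      filter_upwards [hev, self_mem_nhdsWithin] with y hy (hy0 : 0 < y)
      have : (h y - h 0) / (y - 0) < D + 1 := by
        simpa [slope_def_field, div_eq_iff] using hy
      rw [h0, sub_zero, sub_zero, div_lt_iff₀ hy0] at this
      linarith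
    rcases mem_nhdsGT_iff_exists_Ioo_subset.mp hev2 with ⟨u, hu, hsub⟩
    exact ⟨u, hu, fun y hy => hsub hy⟩
  set D := derivWithin h (Ici 0) 0 with hD
  set t : ℝ := min (u / 2) b₀ with ht
  have ht0 : 0 < t := lt_min (by linarith) hb₀
  have htb : t ≤ b₀ := min_le_right _ _
  have htu : t < u := lt_of_le_of_lt (min_le_left _ _) (by linarith)
  set π₁ : ℝ → ℝ := fun y => h y + c₁ * (μ * y * (1 - γ * y)) with hπ
  -- π₁ nonneg on [0, b₀]
  have hπnn : ∀ y ∈ Ioc (0:ℝ) b₀, 0 ≤ π₁ y := by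
    intro y hy
    rcases lt_or_eq_of_le hy.2 with hlt | heq
    · exact (hpos y ⟨hy.1, hlt⟩).le
    · rw [hπ]; simp only [heq, hzero, le_refl]
  -- continuity of the integrand on Ioi 0
  have hcontm : ContinuousOn m (Ioi 0) := by
    apply ContinuousOn.congr (f := fun x : ℝ =>
      x ^ (α - 2) * Real.exp (-(γ * α * (x - 1))) / σ ^ 2)
    · apply ContinuousOn.div_const
      apply ContinuousOn.mul
      · exact fun x hx => ((Real.continuousAt_rpow_const x (α - 2)
          (Or.inl (ne_of_gt hx))).continuousWithinAt)
      · exact (Real.continuous_exp.comp ((continuous_const.mul (continuous_id.sub continuous_const)).neg)).continuousOn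
    · intro x hx; exact hm x hx
  have hconth : ContinuousOn h (Ioi 0) :=
    (hC1.continuousOn).mono (Ioi_subset_Ici le_rfl)
  have hcontf : ContinuousOn (fun y => π₁ y * m y) (Ioi 0) := by
    apply ContinuousOn.mul _ hcontm
    exact hconth.add (Continuous.continuousOn (continuous_const.mul ((continuous_const.mul continuous_id).mul (continuous_const.sub (continuous_const.mul continuous_id)))))
  -- integrability on [0, t]
  have K1 : ℝ := 0
  have hint1 : IntervalIntegrable (fun y => π₁ y * m y) volume 0 t := by
    rw [intervalIntegrable_iff_integrableOn_Ioc_of_le ht0.le]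
    have hg : IntegrableOn (fun y : ℝ =>
        ((D + 1 + c₁ * μ) * Real.exp (γ * α) / σ ^ 2) * y ^ (α - 1)) (Ioc 0 t) := by
      have := (intervalIntegrable_rpow' (r := α - 1) (by linarith) (a := 0) (b := t))
      rw [intervalIntegrable_iff_integrableOn_Ioc_of_le ht0.le] at this
      exact this.const_mul _
    refine hg.mono' ?_ ?_
    · exact (hcontf.aestronglyMeasurable measurableSet_Ioi).mono_measure
        (Measure.restrict_mono (fun y hy => hy.1) le_rfl)
    · rw [ae_restrict_iff' measurableSet_Ioc]
      filter_upwards with y hy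
      have hy0 : 0 < y := hy.1
      have hm1 : m y ≤ y ^ (α - 2) * Real.exp (γ * α) / σ ^ 2 := by
        rw [hm y hy0]
        have hE : Real.exp (-(γ * α * (y - 1))) ≤ Real.exp (γ * α) := by
          apply Real.exp_le_exp.mpr
          nlinarith [hy0.le, mul_pos hγ hα0]
        have hyp := (Real.rpow_pos_of_pos hy0 (α - 2)).le
        apply div_le_div_of_nonneg_right _ hσ2.le |>.trans_eq rfl
        exact mul_le_mul_of_nonneg_left hE hyp
      have hπb : π₁ y ≤ (D + 1 + c₁ * μ) * y := by
        have h1 : h y ≤ (D + 1) * y := hub y ⟨hy0, lt_of_le_of_lt hy.2 htu⟩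
        have h2 : c₁ * (μ * y * (1 - γ * y)) ≤ c₁ * μ * y := by
          nlinarith [mul_pos hγ hy0, mul_pos (mul_pos hc₁ hμ) hy0]
        show h y + c₁ * (μ * y * (1 - γ * y)) ≤ (D + 1 + c₁ * μ) * y
        nlinarith
      have hπ0 : 0 ≤ π₁ y := hπnn y ⟨hy0, hy.2.trans htb⟩
      have hm0 : 0 ≤ m y := (hm_pos y hy0).le
      have hnorm : ‖π₁ y * m y‖ = π₁ y * m y := by
        rw [Real.norm_eq_abs, abs_of_nonneg (mul_nonneg hπ0 hm0)]
      rw [hnorm]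
      calc π₁ y * m y ≤ ((D + 1 + c₁ * μ) * y) * (y ^ (α - 2) * Real.exp (γ * α) / σ ^ 2) := by
            apply mul_le_mul hπb hm1 hm0
            nlinarith [hub y ⟨hy0, lt_of_le_of_lt hy.2 htu⟩,
              (hnn y hy0.le), mul_pos (mul_pos hc₁ hμ) hy0]
        _ = ((D + 1 + c₁ * μ) * Real.exp (γ * α) / σ ^ 2) * y ^ (α - 1) := by
            rw [show α - 1 = (α - 2) + 1 by ring, Real.rpow_add_one (ne_of_gt hy0)]
            ring
  -- integrability on [t, b₀]
  have hint2 : IntervalIntegrable (fun y => π₁ y * m y) volume t b₀ := by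
    apply ContinuousOn.intervalIntegrable
    apply hcontf.mono
    rw [uIcc_of_le htb]
    exact fun y hy => lt_of_lt_of_le ht0 hy.1
  have hint : IntervalIntegrable (fun y => π₁ y * m y) volume 0 b₀ := hint1.trans hint2
  -- positivity of the integral
  have hIpos : 0 < ∫ y in (0:ℝ)..b₀, π₁ y * m y := by
    apply intervalIntegral_pos_of_pos_on hint _ hb₀
    intro y hy
    exact mul_pos (hpos y hy) (hm_pos y hy.1)
  refine ⟨part1, hint, hIpos, ?_⟩
  -- Part 4
  have heq : (fun a => (∫ y in (0:ℝ)..b₀, (π₁ y - π₁ b₀) * m y) + (c₁ - c₂) / (2 * s a))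
      = fun a => (∫ y in (0:ℝ)..b₀, π₁ y * m y) + ((c₁ - c₂) / 2) * (1 / s a) := by
    funext a
    rw [show π₁ b₀ = 0 from hzero]
    simp only [sub_zero]
    rw [div_mul_eq_div_div_swap, div_div, mul_comm (s a) 2, ← div_div, div_eq_mul_one_div]
  have hlim : Tendsto (fun a => (∫ y in (0:ℝ)..b₀, (π₁ y - π₁ b₀) * m y)
      + (c₁ - c₂) / (2 * s a)) (𝓝[>] (0:ℝ)) (𝓝 ((∫ y in (0:ℝ)..b₀, π₁ y * m y) + 0)) := by
    rw [heq]
    apply tendsto_const_nhds.add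
    have := part1.const_mul ((c₁ - c₂) / 2)
    rwa [mul_zero] at this
  rw [add_zero] at hlim
  rw [hlim.liminf_eq]
  exact hIpos
end
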